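/- arXiv:2305.02771 — 3 statements merged into one kernel-verified Lean document; each statement's English description precedes it below -/
import Mathlib

section
/- Let (X, D) be a locally compact, complete metric space, α > 1, and Ω ⊆ X an open set with D_α(Ω) ≠ ∅. Let (d_n)_{n∈ℕ} ⊆ D_α(Ω) and d ∈ D_α(Ω). If d_n → d uniformly on compact subsets of Ω × Ω, then the functionals F_{d_n} Γ-converge to F_d on Lip(Ω) equipped with the topology of uniform convergence on compact subsets of Ω: (liminf) for every sequence (u_n) ⊆ Lip(Ω) converging to u ∈ Lip(Ω) uniformly on compact sets, one has F_d(u) ≤ liminf_n F_{d_n}(u_n); (limsup) for every u ∈ Lip(Ω) there exists (u_n) ⊆ Lip(Ω) converging to u uniformly on compact sets with limsup_n F_{d_n}(u_n) ≤ F_d(u). -/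
open Filter MeasureTheory Set
open scoped ENNReal Topology

/-- Length of the curve `γ` on the interval `[a, b]`, with respect to the
(candidate) distance `d`, defined as a supremum over finite partitions. -/
noncomputable def pathLengthOn {E : Type*} (d : E → E → ℝ) (γ : ℝ → E) (a b : ℝ) : ℝ≥0∞ :=
  ⨆ (k : ℕ) (t : Fin (k + 1) → ℝ) (_ : Monotone t) (_ : t 0 = a) (_ : t (Fin.last k) = b),
    ∑ i : Fin k, ENNReal.ofReal (d (γ (t i.succ)) (γ (t i.castSucc)))

/-- Length of the curve `γ : [0,1] → E` with respect to `d`. -/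
noncomputable def pathLength {E : Type*} (d : E → E → ℝ) (γ : ℝ → E) : ℝ≥0∞ :=
  pathLengthOn d γ 0 1

/-- `d` is a distance on `E`. -/
def IsDistance {E : Type*} (d : E → E → ℝ) : Prop :=
  (∀ x y, d x y = d y x) ∧ (∀ x y z, d x z ≤ d x y + d y z) ∧ ∀ x y, d x y = 0 ↔ x = y

/-- `γ : [0,1] → E` is a Lipschitz curve with respect to `d`. -/
def LipCurve {E : Type*} (d : E → E → ℝ) (γ : ℝ → E) : Prop :=
  ∃ K : ℝ, ∀ s ∈ Icc (0 : ℝ) 1, ∀ t ∈ Icc (0 : ℝ) 1, d (γ s) (γ t) ≤ K * |s - t|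

/-- `(E, d)` is a length space: `d x y` is the infimum of lengths of Lipschitz
curves `γ : [0,1] → E` joining `x` to `y`. -/
def IsLengthDist {E : Type*} (d : E → E → ℝ) : Prop :=
  ∀ x y : E, ENNReal.ofReal (d x y) =
    ⨅ (γ : ℝ → E) (_ : LipCurve d γ) (_ : γ 0 = x) (_ : γ 1 = y), pathLength d γ

/-- `d ∈ 𝒟_α(Ω)` : `d` is a distance on `Ω` making it a length space and satisfying
`α⁻¹ D ≤ d ≤ α D`. -/
def MemD {X : Type*} [MetricSpace X] (α : ℝ) (Ω : Set X) (d : Ω → Ω → ℝ) : Prop :=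
  IsDistance d ∧ IsLengthDist d ∧
    ∀ x y : Ω, α⁻¹ * dist (x : X) (y : X) ≤ d x y ∧ d x y ≤ α * dist (x : X) (y : X)

/-- Uniform convergence `dn → d` on compact subsets of `E × E`. -/
def TendstoUnifCompactly {E : Type*} [TopologicalSpace E]
    (dn : ℕ → E → E → ℝ) (d : E → E → ℝ) : Prop :=
  ∀ K : Set (E × E), IsCompact K → ∀ ε : ℝ, 0 < ε →
    ∃ N : ℕ, ∀ n ≥ N, ∀ p ∈ K, |dn n p.1 p.2 - d p.1 p.2| < ε

/-- `e` is a continuous extension of `d : Ω → Ω → ℝ` to the closure of `Ω`. -/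
def IsContExt {X : Type*} [MetricSpace X] (Ω : Set X) (d : Ω → Ω → ℝ)
    (e : closure Ω → closure Ω → ℝ) : Prop :=
  Continuous (fun p : closure Ω × closure Ω => e p.1 p.2) ∧
    ∀ x y : Ω, e ⟨x, subset_closure x.2⟩ ⟨y, subset_closure y.2⟩ = d x y

/-- `(E, d)` is a geodesic space: any two points are joined by a constant-speed curve
`γ : [0,1] → E` whose length on each subinterval `[t,s]` equals `d (γ t) (γ s)`. -/
def IsGeodesicDist {E : Type*} (d : E → E → ℝ) : Prop :=
  ∀ x y : E, ∃ γ : ℝ → E, γ 0 = x ∧ γ 1 = y ∧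
    (∀ t s : ℝ, 0 ≤ t → t ≤ s → s ≤ 1 →
      pathLengthOn d γ t s = pathLength d γ * ENNReal.ofReal (s - t)) ∧
    ∀ t s : ℝ, 0 ≤ t → t ≤ s → s ≤ 1 →
      pathLengthOn d γ t s = ENNReal.ofReal (d (γ t) (γ s))

/-- Uniform convergence on `[0,1]` of a sequence of curves. -/
def UnifConvCurves {E : Type*} [MetricSpace E] (γn : ℕ → ℝ → E) (γ : ℝ → E) : Prop :=
  ∀ ε : ℝ, 0 < ε → ∃ N : ℕ, ∀ n ≥ N, ∀ t ∈ Icc (0 : ℝ) 1, dist (γn n t) (γ t) < ε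

/-- Γ-convergence of the length functionals `L_{dn}` to `L_d` on the space of
Lipschitz curves `[0,1] → E` with the topology of uniform convergence. -/
def GammaConvLengths {E : Type*} [MetricSpace E] (dn : ℕ → E → E → ℝ) (d : E → E → ℝ) : Prop :=
  (∀ (γn : ℕ → ℝ → E) (γ : ℝ → E),
      (∀ n, LipCurve (fun x y : E => dist x y) (γn n)) →
      LipCurve (fun x y : E => dist x y) γ → UnifConvCurves γn γ →
      pathLength d γ ≤ liminf (fun n => pathLength (dn n) (γn n)) atTop) ∧
  ∀ γ : ℝ → E, LipCurve (fun x y : E => dist x y) γ →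
    ∃ γn : ℕ → ℝ → E, (∀ n, LipCurve (fun x y : E => dist x y) (γn n)) ∧
      UnifConvCurves γn γ ∧
      limsup (fun n => pathLength (dn n) (γn n)) atTop ≤ pathLength d γ

/-- The functional `F_d`: `0` on `1`-Lipschitz functions (w.r.t. `d`), `+∞` otherwise. -/
noncomputable def Ffun {E : Type*} (d : E → E → ℝ) (u : E → ℝ) : ℝ≥0∞ := by
  classical exact if ∀ x y : E, |u x - u y| ≤ d x y then 0 else ⊤

/-- Uniform convergence on compact subsets of `E` for real-valued functions. -/
def UnifConvCompactsFun {E : Type*} [TopologicalSpace E] (un : ℕ → E → ℝ) (u : E → ℝ) : Prop :=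
  ∀ K : Set E, IsCompact K → ∀ ε : ℝ, 0 < ε →
    ∃ N : ℕ, ∀ n ≥ N, ∀ x ∈ K, |un n x - u x| < ε

/-- `u` is a real-valued Lipschitz function on the metric space `E`. -/
def IsLipFun {E : Type*} [MetricSpace E] (u : E → ℝ) : Prop :=
  ∃ K : NNReal, LipschitzWith K u

/-!
If `F_d u = ⊤`, a single pair of points with `|u x - u y| > d x y` witnesses it, and pointwise
convergence carries this strict inequality over to `un n` and `dn n` for all large `n`.

If `u` is `1`-Lipschitz for `d`, the McShane extension `x ↦ ⨅ y ∈ K, u y + dn n x y` of `u` from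
a compact set `K` is `1`-Lipschitz for `dn n`, lies below `u` on `K`, and above
`u - sup_{K × K} |dn n - d|` there. Letting `K` run slowly enough through a compact exhaustion
of `Ω` gives a recovery sequence. The exhaustion exists because `Ω` is connected (points are
joined by Lipschitz curves), and a connected, locally compact, paracompact (e.g. metric) space
is σ-compact.
-/

namespace IsDistance

variable {E : Type*} {d : E → E → ℝ}

lemma self_eq_zero (hd : IsDistance d) (x : E) : d x x = 0 := (hd.2.2 x x).2 rfl

lemma nonneg (hd : IsDistance d) (x y : E) : 0 ≤ d x y := by
  have h := hd.2.1 x y x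
  rw [hd.self_eq_zero, hd.1 y x] at h
  linarith

end IsDistance

lemma IsLengthDist.exists_lipCurve {E : Type*} {d : E → E → ℝ} (hd : IsLengthDist d) (x y : E) :
    ∃ γ : ℝ → E, LipCurve d γ ∧ γ 0 = x ∧ γ 1 = y := by
  by_contra! h
  have := hd x y
  simp only [iInf_eq_top.2 fun γ => iInf_eq_top.2 fun hγ => iInf_eq_top.2 fun h0 =>
    iInf_eq_top.2 fun h1 => absurd h1 (h γ hγ h0)] at this
  exact ENNReal.ofReal_ne_top this

lemma IsLengthDist.preconnectedSpace {E : Type*} [MetricSpace E] {d : E → E → ℝ}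
    (hd : IsLengthDist d) {C : ℝ} (hC : 0 ≤ C) (hdist : ∀ x y, dist x y ≤ C * d x y) :
    PreconnectedSpace E := by
  refine ⟨isPreconnected_of_forall_pair fun x _ y _ => ?_⟩
  obtain ⟨γ, ⟨L, hL⟩, rfl, rfl⟩ := hd.exists_lipCurve x y
  have hγ : LipschitzOnWith (C * L).toNNReal γ (Icc 0 1) :=
    LipschitzOnWith.of_dist_le_mul fun s hs t ht => calc
      dist (γ s) (γ t) ≤ C * (L * |s - t|) :=
          (hdist _ _).trans (mul_le_mul_of_nonneg_left (hL s hs t ht) hC)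
      _ ≤ (C * L).toNNReal * dist s t := by
        rw [← mul_assoc, Real.dist_eq]
        exact mul_le_mul_of_nonneg_right (Real.le_coe_toNNReal _) (abs_nonneg _)
  exact ⟨γ '' Icc 0 1, subset_univ _, mem_image_of_mem γ (by norm_num),
    mem_image_of_mem γ (by norm_num), isPreconnected_Icc.image γ hγ.continuousOn⟩

lemma MemD.preconnectedSpace {X : Type*} [MetricSpace X] {α : ℝ} {Ω : Set X} {d : Ω → Ω → ℝ}
    (hd : MemD α Ω d) (hα : 0 < α) : PreconnectedSpace Ω :=
  hd.2.1.preconnectedSpace hα.le fun x y => (inv_mul_le_iff₀ hα).1 (hd.2.2 x y).1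

lemma sigmaCompactSpace_of_preconnectedSpace (Y : Type*) [TopologicalSpace Y]
    [ParacompactSpace Y] [WeaklyLocallyCompactSpace Y] [PreconnectedSpace Y] :
    SigmaCompactSpace Y := by
  rcases isEmpty_or_nonempty Y with hY | ⟨⟨z⟩⟩
  · infer_instance
  choose K hKc hKx using fun x : Y => exists_compact_mem_nhds x
  obtain ⟨v, hvo, hvY, hvf, hvK⟩ := precise_refinement (fun x => interior (K x))
    (fun _ => isOpen_interior)
    (iUnion_eq_univ_iff.2 fun x => ⟨x, mem_interior_iff_mem_nhds.2 (hKx x)⟩)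
  -- local finiteness of `v` keeps every `L n` compact
  let grow : Set Y → Set Y := fun C => ⋃ x ∈ {x | (v x ∩ C).Nonempty}, K x
  let L : ℕ → Set Y := fun n => grow^[n] {z}
  have hLsucc : ∀ n, L (n + 1) = grow (L n) := fun n => Function.iterate_succ_apply' ..
  have hLc : ∀ n, IsCompact (L n) := by
    intro n
    induction n with
    | zero => exact isCompact_singleton
    | succ n ih =>
      rw [hLsucc]
      exact (hvf.finite_nonempty_inter_compact ih).isCompact_biUnion fun x _ => hKc x
  have hv_subset : ∀ x n, (v x ∩ L n).Nonempty → v x ⊆ L (n + 1) := fun x n h => by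
    rw [hLsucc]
    exact ((hvK x).trans interior_subset).trans (subset_biUnion_of_mem (u := K) h)
  have hUopen : IsOpen (⋃ n, L n) := by
    refine isOpen_iff_forall_mem_open.2 fun y hy => ?_
    obtain ⟨n, hn⟩ := mem_iUnion.1 hy
    obtain ⟨x, hx⟩ := iUnion_eq_univ_iff.1 hvY y
    exact ⟨v x, (hv_subset x n ⟨y, hx, hn⟩).trans (subset_iUnion L _), hvo x, hx⟩
  have hUclosed : IsClosed (⋃ n, L n) := by
    refine isClosed_of_closure_subset fun y hy => ?_
    obtain ⟨x, hx⟩ := iUnion_eq_univ_iff.1 hvY y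
    obtain ⟨w, hwx, hwL⟩ := mem_closure_iff.1 hy (v x) (hvo x) hx
    obtain ⟨n, hn⟩ := mem_iUnion.1 hwL
    exact mem_iUnion.2 ⟨n + 1, hv_subset x n ⟨w, hwx, hn⟩ hx⟩
  refine ⟨⟨L, hLc, ?_⟩⟩
  exact (isClopen_iff.1 ⟨hUclosed, hUopen⟩).resolve_left
    (Nonempty.ne_empty ⟨z, mem_iUnion.2 ⟨0, rfl⟩⟩)

lemma isLipFun_of_abs_sub_le {E : Type*} [MetricSpace E] {f : E → ℝ} {C : ℝ}
    (h : ∀ x y, |f x - f y| ≤ C * dist x y) : IsLipFun f :=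
  ⟨C.toNNReal, LipschitzWith.of_dist_le_mul fun x y => by
    rw [Real.dist_eq]
    exact (h x y).trans (mul_le_mul_of_nonneg_right (Real.le_coe_toNNReal C) dist_nonneg)⟩

lemma IsLipFun.continuous {E : Type*} [MetricSpace E] {f : E → ℝ} (hf : IsLipFun f) :
    Continuous f :=
  hf.elim fun _ hK => hK.continuous

lemma Ffun_eq_zero {E : Type*} {d : E → E → ℝ} {u : E → ℝ}
    (h : ∀ x y : E, |u x - u y| ≤ d x y) : Ffun d u = 0 := if_pos h

lemma Ffun_eq_top {E : Type*} {d : E → E → ℝ} {u : E → ℝ}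
    (h : ¬ ∀ x y : E, |u x - u y| ≤ d x y) : Ffun d u = ⊤ := if_neg h

lemma Ffun_le_liminf {E : Type*} {dn : ℕ → E → E → ℝ} {d : E → E → ℝ} {un : ℕ → E → ℝ}
    {u : E → ℝ} (hd : ∀ x y, Tendsto (fun n => dn n x y) atTop (𝓝 (d x y)))
    (hu : ∀ x, Tendsto (fun n => un n x) atTop (𝓝 (u x))) :
    Ffun d u ≤ liminf (fun n => Ffun (dn n) (un n)) atTop := by
  by_cases h : ∀ x y, |u x - u y| ≤ d x y
  · rw [Ffun_eq_zero h]
    exact zero_le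
  simp only [not_forall, not_le] at h
  obtain ⟨x, y, hxy⟩ := h
  have hgap : ∀ᶠ n in atTop, dn n x y < |un n x - un n y| :=
    ((hd x y).eventually_lt (((hu x).sub (hu y)).abs)) hxy
  have hev : ∀ᶠ n in atTop, Ffun d u ≤ Ffun (dn n) (un n) := hgap.mono fun n hn => by
    rw [Ffun_eq_top fun h' => (h' x y).not_gt hn]
    exact le_top
  simpa only [liminf_const] using liminf_le_liminf hev

lemma TendstoUnifCompactly.tendsto {E : Type*} [TopologicalSpace E] {dn : ℕ → E → E → ℝ}
    {d : E → E → ℝ} (h : TendstoUnifCompactly dn d) (x y : E) :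
    Tendsto (fun n => dn n x y) atTop (𝓝 (d x y)) :=
  Metric.tendsto_atTop.2 fun ε hε => (h {(x, y)} isCompact_singleton ε hε).imp
    fun _ hN n hn => hN n hn (x, y) rfl

lemma UnifConvCompactsFun.tendsto {E : Type*} [TopologicalSpace E] {un : ℕ → E → ℝ}
    {u : E → ℝ} (h : UnifConvCompactsFun un u) (x : E) :
    Tendsto (fun n => un n x) atTop (𝓝 (u x)) :=
  Metric.tendsto_atTop.2 fun ε hε => (h {x} isCompact_singleton ε hε).imp
    fun _ hN n hn => hN n hn x rfl

lemma unifConvCompactsFun_const {E : Type*} [TopologicalSpace E] (u : E → ℝ) :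
    UnifConvCompactsFun (fun _ => u) u :=
  fun _ _ ε hε => ⟨0, fun _ _ _ _ => by simpa using hε⟩

noncomputable def mcShaneExt {E : Type*} (e : E → E → ℝ) (C : Set E) (u : E → ℝ) (x : E) : ℝ :=
  ⨅ y : C, u y + e x y

section McShane

variable {E : Type*} {e : E → E → ℝ} {C : Set E} {u : E → ℝ}

lemma bddBelow_mcShaneExt (he : IsDistance e) (hu : BddBelow (u '' C)) (x : E) :
    BddBelow (range fun y : C => u y + e x y) := by
  obtain ⟨b, hb⟩ := hu
  exact ⟨b, forall_mem_range.2 fun y => le_add_of_le_of_nonneg (hb (mem_image_of_mem u y.2))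
    (he.nonneg x y)⟩

lemma mcShaneExt_le_add (he : IsDistance e) (hu : BddBelow (u '' C)) (x : E) {y : E}
    (hy : y ∈ C) : mcShaneExt e C u x ≤ u y + e x y :=
  ciInf_le (bddBelow_mcShaneExt he hu x) ⟨y, hy⟩

lemma mcShaneExt_le (he : IsDistance e) (hu : BddBelow (u '' C)) {x : E} (hx : x ∈ C) :
    mcShaneExt e C u x ≤ u x := by
  simpa [he.self_eq_zero] using mcShaneExt_le_add he hu x hx

lemma le_mcShaneExt (hC : C.Nonempty) {x : E} {c : ℝ} (h : ∀ y ∈ C, c ≤ u y + e x y) :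
    c ≤ mcShaneExt e C u x :=
  have := hC.to_subtype
  le_ciInf fun y => h y y.2

lemma abs_mcShaneExt_sub_le (he : IsDistance e) (hu : BddBelow (u '' C)) (x y : E) :
    |mcShaneExt e C u x - mcShaneExt e C u y| ≤ e x y := by
  rcases C.eq_empty_or_nonempty with rfl | hC
  · simp [mcShaneExt, he.nonneg]
  have key : ∀ a b, mcShaneExt e C u a - e a b ≤ mcShaneExt e C u b := fun a b =>
    le_mcShaneExt hC fun z hz => by
      linarith [mcShaneExt_le_add he hu a hz, he.2.1 a b z]
  rw [abs_sub_le_iff]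
  have := key y x
  rw [he.1 y x] at this
  constructor <;> linarith [key x y]

end McShane

lemma exists_eventually_le_and (P : ℕ → ℕ → Prop) (h : ∀ m, ∀ᶠ n in atTop, P n m) :
    ∃ φ : ℕ → ℕ, ∀ m, ∀ᶠ n in atTop, m ≤ φ n ∧ P n (φ n) := by
  classical
  refine ⟨fun n => Nat.findGreatest (P n) n, fun m => ?_⟩
  filter_upwards [h m, eventually_ge_atTop m] with n hP hmn
  exact ⟨Nat.le_findGreatest hmn hP, Nat.findGreatest_spec hmn hP⟩

lemma exists_recovery_sequence {E : Type*} [MetricSpace E] [WeaklyLocallyCompactSpace E]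
    [SigmaCompactSpace E] {α : ℝ} {dn : ℕ → E → E → ℝ} (hdn : ∀ n, IsDistance (dn n))
    (hdn_le : ∀ n x y, dn n x y ≤ α * dist x y) {d : E → E → ℝ}
    (hconv : TendstoUnifCompactly dn d) {u : E → ℝ} (hu : Continuous u)
    (hud : ∀ x y, |u x - u y| ≤ d x y) :
    ∃ un : ℕ → E → ℝ, (∀ n, IsLipFun (un n)) ∧ UnifConvCompactsFun un u ∧
      ∀ n x y, |un n x - un n y| ≤ dn n x y := by
  let K := CompactExhaustion.choice E
  -- `φ n` is a level of the exhaustion on which `dn n` is already `1 / (φ n + 1)`-close to `d`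
  obtain ⟨φ, hφ⟩ := exists_eventually_le_and
    (fun n m => ∀ x ∈ K m, ∀ y ∈ K m, |dn n x y - d x y| < 1 / ((m : ℝ) + 1)) fun m => by
      obtain ⟨N, hN⟩ := hconv _ ((K.isCompact m).prod (K.isCompact m)) _ Nat.one_div_pos_of_nat
      exact eventually_atTop.2 ⟨N, fun n hn x hx y hy => hN n hn (x, y) ⟨hx, hy⟩⟩
  have hbdd : ∀ m, BddBelow (u '' K m) := fun m =>
    (K.isCompact m).bddBelow_image hu.continuousOn
  refine ⟨fun n => mcShaneExt (dn n) (K (φ n)) u, fun n => isLipFun_of_abs_sub_le fun x y =>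
    (abs_mcShaneExt_sub_le (hdn n) (hbdd _) x y).trans (hdn_le n x y), ?_,
    fun n => abs_mcShaneExt_sub_le (hdn n) (hbdd _)⟩
  intro C hC ε hε
  obtain ⟨m₁, hm₁⟩ := K.exists_superset_of_isCompact hC
  obtain ⟨m₂, hm₂⟩ := exists_nat_one_div_lt hε
  refine eventually_atTop.1 ((hφ (max m₁ m₂)).mono fun n ⟨hle, hclose⟩ x hx => ?_)
  have hxK : x ∈ K (φ n) := K.subset (le_of_max_le_left hle) (hm₁ hx)
  have hsmall : 1 / ((φ n : ℝ) + 1) < ε := lt_of_le_of_lt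
    (Nat.one_div_le_one_div (le_of_max_le_right hle)) hm₂
  have upper := mcShaneExt_le (hdn n) (hbdd _) hxK
  have lower : u x - 1 / ((φ n : ℝ) + 1) ≤ mcShaneExt (dn n) (K (φ n)) u x :=
    le_mcShaneExt ⟨x, hxK⟩ fun y hy => by
      linarith [(abs_lt.1 (hclose x hxK y hy)).1, le_of_abs_le (hud x y)]
  rw [abs_lt]
  constructor <;> linarith

theorem stmt9_general {X : Type*} [MetricSpace X] [LocallyCompactSpace X]
    (Ω : Set X) (hΩ : IsOpen Ω) (α : ℝ) (hα : 1 < α)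
    (dn : ℕ → Ω → Ω → ℝ) (hdn : ∀ n, MemD α Ω (dn n))
    (d : Ω → Ω → ℝ) (hd : MemD α Ω d)
    (hconv : TendstoUnifCompactly dn d) :
    (∀ (un : ℕ → Ω → ℝ) (u : Ω → ℝ), (∀ n, IsLipFun (un n)) → IsLipFun u →
      UnifConvCompactsFun un u →
      Ffun d u ≤ liminf (fun n => Ffun (dn n) (un n)) atTop) ∧
    ∀ u : Ω → ℝ, IsLipFun u →
      ∃ un : ℕ → Ω → ℝ, (∀ n, IsLipFun (un n)) ∧ UnifConvCompactsFun un u ∧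
        limsup (fun n => Ffun (dn n) (un n)) atTop ≤ Ffun d u := by
  refine ⟨fun un u _ _ hun => Ffun_le_liminf hconv.tendsto hun.tendsto, fun u hu => ?_⟩
  by_cases hud : ∀ x y, |u x - u y| ≤ d x y
  · have := hΩ.locallyCompactSpace
    have := hd.preconnectedSpace (zero_lt_one.trans hα)
    have := sigmaCompactSpace_of_preconnectedSpace Ω
    obtain ⟨un, hun, hconv_u, hlip⟩ := exists_recovery_sequence (fun n => (hdn n).1)
      (fun n x y => ((hdn n).2.2 x y).2) hconv hu.continuous hud
    refine ⟨un, hun, hconv_u, ?_⟩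
    simp only [Ffun_eq_zero (hlip _), Ffun_eq_zero hud, limsup_const, le_refl]
  · exact ⟨fun _ => u, fun _ => hu, unifConvCompactsFun_const u,
      (Ffun_eq_top hud).symm ▸ le_top⟩

/-- uniform convergence of the distances on compact sets implies
Γ-convergence of the functionals `F_{dn}` to `F_d` on Lipschitz functions with the
topology of uniform convergence on compact sets. -/
theorem stmt9 {X : Type*} [MetricSpace X] [LocallyCompactSpace X] [CompleteSpace X]
    (Ω : Set X) (hΩ : IsOpen Ω) (α : ℝ) (hα : 1 < α)
    (hne : ∃ d₀ : Ω → Ω → ℝ, MemD α Ω d₀)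
    (dn : ℕ → Ω → Ω → ℝ) (hdn : ∀ n, MemD α Ω (dn n))
    (d : Ω → Ω → ℝ) (hd : MemD α Ω d)
    (hconv : TendstoUnifCompactly dn d) :
    (∀ (un : ℕ → Ω → ℝ) (u : Ω → ℝ), (∀ n, IsLipFun (un n)) → IsLipFun u →
      UnifConvCompactsFun un u →
      Ffun d u ≤ liminf (fun n => Ffun (dn n) (un n)) atTop) ∧
    ∀ u : Ω → ℝ, IsLipFun u →
      ∃ un : ℕ → Ω → ℝ, (∀ n, IsLipFun (un n)) ∧ UnifConvCompactsFun un u ∧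
        limsup (fun n => Ffun (dn n) (un n)) atTop ≤ Ffun d u :=
  stmt9_general Ω hΩ α hα dn hdn d hd hconv
end

section
/- Let Ω := (0,1)² ⊆ ℝ² and let d := 2·d_Eucl restricted to Ω × Ω, which belongs to D_2(Ω, d_Eucl). Then there exist a nondecreasing sequence (d_n)_{n∈ℕ} ⊆ D_2(Ω, d_Eucl) and a distance d̃ on Ω with d̃ ≠ d such that: (a) d_n → d̃ uniformly on compact subsets of Ω × Ω; and (b) L_{d_n} Γ-converges to L_d on Lip([0,1]; Ω) with the topology of uniform convergence, i.e. for every sequence of Lipschitz curves γⁿ : [0,1] → Ω converging uniformly to a Lipschitz curve γ : [0,1] → Ω one has L_d(γ) ≤ liminf_n L_{d_n}(γⁿ), and for every Lipschitz curve γ : [0,1] → Ω there exist Lipschitz curves γⁿ : [0,1] → Ω converging uniformly to γ with limsup_n L_{d_n}(γⁿ) ≤ L_d(γ). -/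
open Filter MeasureTheory Set
open scoped ENNReal Topology

/-!
For `ε > 0` let `f_ε x = (x₂ - ε)⁺` and `ρ_ε x y = min (2 |x - y|) (|x - y| + f_ε x + f_ε y)`, and
let `d_ε` be the length distance induced by `ρ_ε` on `Ω = (0,1)²`: it is the Euclidean distance
inside the strip `{x₂ ≤ ε}` along the bottom edge and twice it away from the strip. As `ε ↓ 0`
the `d_ε` increase to a distance `d̃ ≤ 2 |·|`, uniformly on compact sets by Dini's theorem since
they are all continuous; `d̃ ≠ 2 |·|` because two points near the bottom edge can still be joined
through the strip.

The lengths nevertheless Γ-converge to the `2 |·|`-length: a Lipschitz curve in `Ω` stays at some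
height `δ > 0`, so do uniformly close curves, and once `ε ≤ δ / 8` the `d_ε`-length of such a curve
is its `2 |·|`-length, because `d_ε = 2 |·|` at small scales away from the strip. Lower
semicontinuity of the length under pointwise convergence gives the liminf inequality; since
`d_ε ≤ 2 |·|`, constant sequences are recovery sequences.
-/

open scoped NNReal

/-! ### Pseudo-distances and lengths of curves -/

structure PseudoDist (E : Type*) where
  d : E → E → ℝ
  self : ∀ x, d x x = 0
  comm : ∀ x y, d x y = d y x
  triangle : ∀ x y z, d x z ≤ d x y + d y z

namespace PseudoDist

variable {E : Type*} (ρ : PseudoDist E)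

lemma nonneg (x y : E) : 0 ≤ ρ.d x y := by
  linarith [ρ.triangle x y x, ρ.self x, ρ.comm x y]

lemma abs_sub_le (x y x' y' : E) : |ρ.d x y - ρ.d x' y'| ≤ ρ.d x x' + ρ.d y y' := by
  rw [abs_sub_le_iff]
  constructor <;> linarith [ρ.triangle x x' y, ρ.triangle x' y' y, ρ.triangle x' x y',
    ρ.triangle x y y', ρ.comm x x', ρ.comm y y']

lemma isDistance (h : ∀ x y, ρ.d x y = 0 → x = y) : IsDistance ρ.d :=
  ⟨ρ.comm, ρ.triangle, fun x y => ⟨h x y, fun hxy => hxy ▸ ρ.self x⟩⟩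

/-- `E` with the extended pseudo-metric `ofReal ∘ ρ.d`, so that `eVariationOn` applies. -/
def Space (_ : PseudoDist E) : Type _ := E

noncomputable instance : PseudoEMetricSpace ρ.Space where
  edist x y := ENNReal.ofReal (ρ.d x y)
  edist_self x := ENNReal.ofReal_eq_zero.2 (ρ.self x).le
  edist_comm x y := congrArg ENNReal.ofReal (ρ.comm x y)
  edist_triangle x y z :=
    (ENNReal.ofReal_le_ofReal (ρ.triangle x y z)).trans ENNReal.ofReal_add_le

def toSpace {α : Type*} (f : α → E) : α → ρ.Space := f

def twoDist (X : Type*) [PseudoMetricSpace X] : PseudoDist X where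
  d x y := 2 * dist x y
  self x := by simp
  comm x y := by rw [dist_comm]
  triangle x y z := by linarith [dist_triangle x y z]

end PseudoDist

section Partition

variable {E : Type*}

def partitionSeq {k : ℕ} (t : Fin (k + 1) → ℝ) (n : ℕ) : ℝ := t ⟨min n k, by omega⟩

lemma monotone_partitionSeq {k : ℕ} {t : Fin (k + 1) → ℝ} (ht : Monotone t) :
    Monotone (partitionSeq t) :=
  fun _ _ h => ht (Fin.mk_le_mk.2 (min_le_min_right k h))

lemma partitionSeq_mem_Icc {k : ℕ} {t : Fin (k + 1) → ℝ} (ht : Monotone t) (n : ℕ) :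
    partitionSeq t n ∈ Icc (t 0) (t (Fin.last k)) :=
  ⟨ht (Fin.zero_le _), ht (Fin.le_last _)⟩

lemma partitionSeq_zero {k : ℕ} (t : Fin (k + 1) → ℝ) : partitionSeq t 0 = t 0 := rfl

lemma partitionSeq_eq_last {k : ℕ} (t : Fin (k + 1) → ℝ) :
    partitionSeq t k = t (Fin.last k) := by
  simp [partitionSeq, Fin.last]

lemma sum_fin_eq_sum_range_partitionSeq {M : Type*} [AddCommMonoid M] {k : ℕ}
    (t : Fin (k + 1) → ℝ) (g : ℝ → ℝ → M) :
    ∑ i : Fin k, g (t i.succ) (t i.castSucc)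
      = ∑ i ∈ Finset.range k, g (partitionSeq t (i + 1)) (partitionSeq t i) := by
  rw [← Fin.sum_univ_eq_sum_range (fun i => g (partitionSeq t (i + 1)) (partitionSeq t i))]
  refine Finset.sum_congr rfl fun i _ => ?_
  congr 2 <;> exact Fin.ext (by simp)

lemma sum_range_le_pathLengthOn (d : E → E → ℝ) (γ : ℝ → E) {v : ℕ → ℝ} (hv : Monotone v)
    (N : ℕ) :
    ∑ i ∈ Finset.range N, ENNReal.ofReal (d (γ (v (i + 1))) (γ (v i)))
      ≤ pathLengthOn d γ (v 0) (v N) := by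
  refine le_trans (le_of_eq ?_) (le_iSup_of_le N <| le_iSup_of_le (fun j : Fin (N + 1) => v j) <|
    le_iSup_of_le (fun i j h => hv h) <| le_iSup_of_le rfl <| le_iSup_of_le rfl le_rfl)
  rw [← Fin.sum_univ_eq_sum_range (fun i => ENNReal.ofReal (d (γ (v (i + 1))) (γ (v i))))]
  rfl

lemma pathLengthOn_mono {d d' : E → E → ℝ} (h : ∀ x y, d x y ≤ d' x y) (γ : ℝ → E) (a b : ℝ) :
    pathLengthOn d γ a b ≤ pathLengthOn d' γ a b :=
  iSup_mono fun _ => iSup_mono fun _ => iSup_mono fun _ => iSup_mono fun _ => iSup_mono fun _ =>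
    Finset.sum_le_sum fun _ _ => ENNReal.ofReal_le_ofReal (h _ _)

end Partition

section Curve

variable {E : Type*}

noncomputable def curveAppend (γ₁ γ₂ : ℝ → E) (s : ℝ) : E :=
  if s ≤ 1 / 2 then γ₁ (2 * s) else γ₂ (2 * s - 1)

lemma curveAppend_eqOn_left (γ₁ γ₂ : ℝ → E) :
    EqOn (curveAppend γ₁ γ₂) (fun s => γ₁ (2 * s + 0)) (Icc 0 (1 / 2)) := fun s hs => by
  simp only [curveAppend, if_pos hs.2, add_zero]

lemma curveAppend_eqOn_right {γ₁ γ₂ : ℝ → E} (h : γ₁ 1 = γ₂ 0) :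
    EqOn (curveAppend γ₁ γ₂) (fun s => γ₂ (2 * s + -1)) (Icc (1 / 2) 1) := fun s hs => by
  rcases hs.1.eq_or_lt with rfl | hs'
  · norm_num [curveAppend, h]
  · simp only [curveAppend, if_neg (not_le.2 hs'), sub_eq_add_neg]

lemma LipCurve.mono {d d' : E → E → ℝ} {γ : ℝ → E} {C : ℝ} (hC : 0 ≤ C)
    (h : ∀ x y, d x y ≤ C * d' x y) (hγ : LipCurve d' γ) : LipCurve d γ := by
  obtain ⟨K, hK⟩ := hγ
  exact ⟨C * K, fun s hs t ht => (h _ _).trans <| by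
    rw [mul_assoc]; exact mul_le_mul_of_nonneg_left (hK s hs t ht) hC⟩

lemma LipCurve.comp_one_sub {d : E → E → ℝ} {γ : ℝ → E} (hγ : LipCurve d γ) :
    LipCurve d fun s => γ (1 - s) := by
  obtain ⟨K, hK⟩ := hγ
  refine ⟨K, fun s hs t ht => ?_⟩
  have := hK (1 - s) ⟨by linarith [hs.2], by linarith [hs.1]⟩ (1 - t)
    ⟨by linarith [ht.2], by linarith [ht.1]⟩
  rwa [show 1 - s - (1 - t) = -(s - t) by ring, abs_neg] at this

lemma LipCurve.comp_affine {d : E → E → ℝ} {γ : ℝ → E} (hγ : LipCurve d γ)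
    {u v : ℝ} (hu : 0 ≤ u) (huv : u ≤ v) (hv : v ≤ 1) :
    LipCurve d fun s => γ ((v - u) * s + u) := by
  obtain ⟨K, hK⟩ := hγ
  have hmem : ∀ s ∈ Icc (0 : ℝ) 1, (v - u) * s + u ∈ Icc (0 : ℝ) 1 := fun s hs =>
    ⟨by nlinarith [hs.1], by nlinarith [hs.2]⟩
  refine ⟨K * (v - u), fun s hs t ht => (hK _ (hmem s hs) _ (hmem t ht)).trans (le_of_eq ?_)⟩
  rw [show (v - u) * s + u - ((v - u) * t + u) = (v - u) * (s - t) by ring, abs_mul,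
    abs_of_nonneg (sub_nonneg.2 huv), mul_assoc]

end Curve

namespace PseudoDist

variable {E : Type*} (ρ : PseudoDist E) (γ : ℝ → E)

lemma pathLengthOn_eq_eVariationOn {a b : ℝ} (hab : a ≤ b) :
    pathLengthOn ρ.d γ a b = eVariationOn (ρ.toSpace γ) (Icc a b) := by
  apply le_antisymm
  · refine iSup_le fun k => iSup_le fun t => iSup_le fun ht => iSup_le fun h0 =>
      iSup_le fun hk => ?_
    rw [sum_fin_eq_sum_range_partitionSeq t fun s r => ENNReal.ofReal (ρ.d (γ s) (γ r))]
    exact eVariationOn.sum_le (monotone_partitionSeq ht) fun n =>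
      h0 ▸ hk ▸ partitionSeq_mem_Icc ht n
  · refine iSup_le fun ⟨n, u, hu, us⟩ => ?_
    -- the partition `a ≤ u 0 ≤ … ≤ u n ≤ b`
    let v : ℕ → ℝ := fun j => if j = 0 then a else if j ≤ n + 1 then u (j - 1) else b
    have hv : Monotone v := by
      refine monotone_nat_of_le_succ fun j => ?_
      simp only [v]
      split_ifs <;> first
        | contradiction
        | omega
        | exact le_rfl
        | exact hab
        | exact (us _).1
        | exact (us _).2
        | exact hu (by omega)
    have hv0 : v 0 = a := rfl
    have hvn : v (n + 2) = b := by simp [v]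
    calc ∑ i ∈ Finset.range n, edist (ρ.toSpace γ (u (i + 1))) (ρ.toSpace γ (u i))
        = ∑ i ∈ Finset.range n, ENNReal.ofReal (ρ.d (γ (v (i + 1 + 1))) (γ (v (i + 1)))) := by
          refine Finset.sum_congr rfl fun i hi => ?_
          have hi : i < n := Finset.mem_range.1 hi
          simp only [v, if_neg (Nat.succ_ne_zero _), if_pos (show i + 1 ≤ n + 1 by omega),
            if_pos (show i + 1 + 1 ≤ n + 1 by omega), Nat.add_sub_cancel]
          rfl
      _ ≤ ∑ i ∈ Finset.range (n + 2), ENNReal.ofReal (ρ.d (γ (v (i + 1))) (γ (v i))) := by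
          rw [Finset.sum_range_succ', Finset.sum_range_succ, add_assoc]
          exact le_self_add
      _ ≤ pathLengthOn ρ.d γ a b := hv0 ▸ hvn ▸ sum_range_le_pathLengthOn ρ.d γ hv (n + 2)

lemma ofReal_le_pathLengthOn {a b x y : ℝ} (hx : x ∈ Icc a b) (hy : y ∈ Icc a b) :
    ENNReal.ofReal (ρ.d (γ x) (γ y)) ≤ pathLengthOn ρ.d γ a b := by
  rw [ρ.pathLengthOn_eq_eVariationOn γ (hx.1.trans hx.2)]
  exact eVariationOn.edist_le (ρ.toSpace γ) hx hy

lemma pathLengthOn_add {a b c : ℝ} (hab : a ≤ b) (hbc : b ≤ c) :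
    pathLengthOn ρ.d γ a b + pathLengthOn ρ.d γ b c = pathLengthOn ρ.d γ a c := by
  rw [ρ.pathLengthOn_eq_eVariationOn γ hab, ρ.pathLengthOn_eq_eVariationOn γ hbc,
    ρ.pathLengthOn_eq_eVariationOn γ (hab.trans hbc)]
  simpa using eVariationOn.Icc_add_Icc (ρ.toSpace γ) (s := univ) hab hbc (mem_univ b)

lemma pathLengthOn_congr {γ' : ℝ → E} {a b : ℝ} (hab : a ≤ b) (h : EqOn γ γ' (Icc a b)) :
    pathLengthOn ρ.d γ a b = pathLengthOn ρ.d γ' a b := by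
  rw [ρ.pathLengthOn_eq_eVariationOn γ hab, ρ.pathLengthOn_eq_eVariationOn γ' hab]
  exact eVariationOn.eq_of_eqOn h

lemma pathLengthOn_comp_affine {c e a b : ℝ} (hc : 0 < c) (hab : a ≤ b) :
    pathLengthOn ρ.d (fun s => γ (c * s + e)) a b = pathLengthOn ρ.d γ (c * a + e) (c * b + e) := by
  rw [ρ.pathLengthOn_eq_eVariationOn _ hab, ρ.pathLengthOn_eq_eVariationOn γ (by nlinarith),
    ← Set.image_affine_Icc' hc]
  exact eVariationOn.comp_eq_of_monotoneOn (ρ.toSpace γ) _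
    fun x _ y _ hxy => show c * x + e ≤ c * y + e by nlinarith

lemma pathLength_comp_one_sub :
    pathLength ρ.d (fun s => γ (1 - s)) = pathLength ρ.d γ := by
  rw [pathLength, pathLength, ρ.pathLengthOn_eq_eVariationOn _ zero_le_one,
    ρ.pathLengthOn_eq_eVariationOn γ zero_le_one]
  have h := eVariationOn.comp_eq_of_antitoneOn (ρ.toSpace γ) (fun s : ℝ => 1 - s)
    (t := Icc 0 1) fun x _ y _ hxy => show 1 - y ≤ 1 - x by linarith
  rwa [Set.image_const_sub_Icc, sub_zero, sub_self] at h

lemma pathLengthOn_le_mul {a b C : ℝ} (hC : 0 ≤ C) (hab : a ≤ b)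
    (h : ∀ s ∈ Icc a b, ∀ t ∈ Icc a b, ρ.d (γ s) (γ t) ≤ C * |s - t|) :
    pathLengthOn ρ.d γ a b ≤ ENNReal.ofReal (C * (b - a)) := by
  have hlip : LipschitzOnWith C.toNNReal (ρ.toSpace γ) (Icc a b) := fun s hs t ht =>
    calc ENNReal.ofReal (ρ.d (γ s) (γ t)) ≤ ENNReal.ofReal (C * |s - t|) :=
          ENNReal.ofReal_le_ofReal (h s hs t ht)
      _ = ENNReal.ofReal C * edist s t := by
          rw [ENNReal.ofReal_mul hC, edist_dist, Real.dist_eq]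
  rw [ρ.pathLengthOn_eq_eVariationOn γ hab, ENNReal.ofReal_mul hC, ← eVariationOn_id_Icc]
  exact hlip.comp_eVariationOn_le (mapsTo_id _)

lemma pathLength_const (x : E) : pathLength ρ.d (fun _ => x) = 0 :=
  nonpos_iff_eq_zero.1 <| by
    simpa [pathLength] using
      ρ.pathLengthOn_le_mul (fun _ => x) le_rfl zero_le_one fun _ _ _ _ => by simp [ρ.self]

lemma pathLength_curveAppend {γ₁ γ₂ : ℝ → E} (h : γ₁ 1 = γ₂ 0) :
    pathLength ρ.d (curveAppend γ₁ γ₂) = pathLength ρ.d γ₁ + pathLength ρ.d γ₂ := by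
  rw [pathLength, ← ρ.pathLengthOn_add _ (by norm_num : (0 : ℝ) ≤ 1 / 2) (by norm_num),
    ρ.pathLengthOn_congr _ (by norm_num) (curveAppend_eqOn_left γ₁ γ₂),
    ρ.pathLengthOn_congr _ (by norm_num) (curveAppend_eqOn_right h),
    ρ.pathLengthOn_comp_affine γ₁ two_pos (by norm_num),
    ρ.pathLengthOn_comp_affine γ₂ two_pos (by norm_num)]
  norm_num [pathLength]

lemma pathLengthOn_le_of_chord_le {e : E → E → ℝ} {a b : ℝ}
    (h : ∀ s t, a ≤ s → s ≤ t → t ≤ b →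
      ENNReal.ofReal (e (γ t) (γ s)) ≤ pathLengthOn ρ.d γ s t) :
    pathLengthOn e γ a b ≤ pathLengthOn ρ.d γ a b := by
  refine iSup_le fun k => iSup_le fun t => iSup_le fun ht => iSup_le fun h0 => iSup_le fun hk => ?_
  have hu := monotone_partitionSeq ht
  have hmem := partitionSeq_mem_Icc ht
  rw [h0, hk] at hmem
  rw [sum_fin_eq_sum_range_partitionSeq t fun s r => ENNReal.ofReal (e (γ s) (γ r))]
  calc ∑ i ∈ Finset.range k,
        ENNReal.ofReal (e (γ (partitionSeq t (i + 1))) (γ (partitionSeq t i)))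
      ≤ ∑ i ∈ Finset.range k, pathLengthOn ρ.d γ (partitionSeq t i) (partitionSeq t (i + 1)) :=
        Finset.sum_le_sum fun i _ => h _ _ (hmem i).1 (hu i.le_succ) (hmem _).2
    _ = pathLengthOn ρ.d γ (partitionSeq t 0) (partitionSeq t k) := by
        rw [ρ.pathLengthOn_eq_eVariationOn γ (hu k.zero_le), ← eVariationOn.sum' _ hu]
        exact Finset.sum_congr rfl fun i _ => ρ.pathLengthOn_eq_eVariationOn γ (hu i.le_succ)
    _ = pathLengthOn ρ.d γ a b := by rw [partitionSeq_zero, partitionSeq_eq_last, h0, hk]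

lemma ofReal_le_pathLengthOn_of_locally_le (e : PseudoDist E) {a b r : ℝ} (hab : a ≤ b) (hr : 0 < r)
    (hloc : ∀ s ∈ Icc a b, ∀ t ∈ Icc a b, |s - t| ≤ r → e.d (γ s) (γ t) ≤ ρ.d (γ s) (γ t)) :
    ENNReal.ofReal (e.d (γ a) (γ b)) ≤ pathLengthOn ρ.d γ a b := by
  have hclose : ∀ s, a ≤ s → s ≤ b → b - s ≤ r →
      ENNReal.ofReal (e.d (γ s) (γ b)) ≤ pathLengthOn ρ.d γ s b := fun s hs hsb hsr =>
    (ENNReal.ofReal_le_ofReal (hloc s ⟨hs, hsb⟩ b ⟨hab, le_rfl⟩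
      (by rwa [abs_sub_comm, abs_of_nonneg (sub_nonneg.2 hsb)]))).trans
      (ρ.ofReal_le_pathLengthOn γ ⟨le_rfl, hsb⟩ ⟨hsb, le_rfl⟩)
  suffices key : ∀ N : ℕ, ∀ s, a ≤ s → s ≤ b → b - s ≤ N * r →
      ENNReal.ofReal (e.d (γ s) (γ b)) ≤ pathLengthOn ρ.d γ s b by
    obtain ⟨N, hN⟩ := exists_nat_ge ((b - a) / r)
    exact key N a le_rfl hab (by rwa [div_le_iff₀ hr] at hN)
  intro N
  induction N with
  | zero => exact fun s hs hsb hN => hclose s hs hsb (by simp at hN; linarith)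
  | succ N ih =>
    intro s hs hsb hN
    by_cases hsr : b - s ≤ r
    · exact hclose s hs hsb hsr
    have hmid : s + r ≤ b := by linarith
    calc ENNReal.ofReal (e.d (γ s) (γ b))
        ≤ ENNReal.ofReal (e.d (γ s) (γ (s + r))) + ENNReal.ofReal (e.d (γ (s + r)) (γ b)) :=
          (ENNReal.ofReal_le_ofReal (e.triangle _ _ _)).trans ENNReal.ofReal_add_le
      _ ≤ pathLengthOn ρ.d γ s (s + r) + pathLengthOn ρ.d γ (s + r) b := by
          gcongr
          · exact (ENNReal.ofReal_le_ofReal (hloc s ⟨hs, hsb⟩ (s + r) ⟨by linarith, hmid⟩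
              (by rw [sub_add_cancel_left, abs_neg, abs_of_pos hr]))).trans
              (ρ.ofReal_le_pathLengthOn γ ⟨le_rfl, by linarith⟩ ⟨by linarith, le_rfl⟩)
          · exact ih (s + r) (by linarith) hmid (by push_cast at hN; linarith)
      _ = pathLengthOn ρ.d γ s b := ρ.pathLengthOn_add γ (by linarith) hmid

lemma pathLengthOn_le_of_locally_le (e : PseudoDist E) {a b r : ℝ} (hr : 0 < r)
    (hloc : ∀ s ∈ Icc a b, ∀ t ∈ Icc a b, |s - t| ≤ r → e.d (γ s) (γ t) ≤ ρ.d (γ s) (γ t)) :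
    pathLengthOn e.d γ a b ≤ pathLengthOn ρ.d γ a b :=
  ρ.pathLengthOn_le_of_chord_le γ fun s t has hst htb => by
    rw [e.comm]
    exact ρ.ofReal_le_pathLengthOn_of_locally_le γ e hst hr fun s' hs' t' ht' =>
      hloc s' ⟨has.trans hs'.1, hs'.2.trans htb⟩ t' ⟨has.trans ht'.1, ht'.2.trans htb⟩

end PseudoDist

section Metric

variable {X : Type*} [PseudoMetricSpace X]

lemma lipCurve_const (x : X) : LipCurve (fun a b : X => dist a b) fun _ => x :=
  ⟨0, fun s _ t _ => by simp⟩

lemma LipCurve.continuousOn {γ : ℝ → X} (hγ : LipCurve (fun a b : X => dist a b) γ) :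
    ContinuousOn γ (Icc 0 1) := by
  obtain ⟨K, hK⟩ := hγ
  refine (LipschitzOnWith.of_dist_le_mul (K := K.toNNReal) fun s hs t ht => ?_).continuousOn
  rw [Real.dist_eq]
  exact (hK s hs t ht).trans (mul_le_mul_of_nonneg_right (Real.le_coe_toNNReal K) (abs_nonneg _))

lemma dist_le_mul_of_Icc_union {f : ℝ → X} {K a m b : ℝ}
    (h₁ : ∀ s ∈ Icc a m, ∀ t ∈ Icc a m, dist (f s) (f t) ≤ K * |s - t|)
    (h₂ : ∀ s ∈ Icc m b, ∀ t ∈ Icc m b, dist (f s) (f t) ≤ K * |s - t|) :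
    ∀ s ∈ Icc a b, ∀ t ∈ Icc a b, dist (f s) (f t) ≤ K * |s - t| := by
  intro s hs t ht
  wlog hst : s ≤ t generalizing s t
  · rw [dist_comm, abs_sub_comm]
    exact this t ht s hs (le_of_not_ge hst)
  rcases le_total t m with htm | hmt
  · exact h₁ s ⟨hs.1, hst.trans htm⟩ t ⟨ht.1, htm⟩
  rcases le_total m s with hms | hsm
  · exact h₂ s ⟨hms, hs.2⟩ t ⟨hmt, ht.2⟩
  calc dist (f s) (f t) ≤ dist (f s) (f m) + dist (f m) (f t) := dist_triangle _ _ _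
    _ ≤ K * |s - m| + K * |m - t| :=
        add_le_add (h₁ s ⟨hs.1, hsm⟩ m ⟨hs.1.trans hsm, le_rfl⟩)
          (h₂ m ⟨le_rfl, hmt.trans ht.2⟩ t ⟨hmt, ht.2⟩)
    _ = K * |s - t| := by
        rw [abs_of_nonpos (sub_nonpos.2 hsm), abs_of_nonpos (sub_nonpos.2 hmt),
          abs_of_nonpos (sub_nonpos.2 hst)]
        ring

lemma LipCurve.append {γ₁ γ₂ : ℝ → X} (h₁ : LipCurve (fun a b : X => dist a b) γ₁)
    (h₂ : LipCurve (fun a b : X => dist a b) γ₂) (h : γ₁ 1 = γ₂ 0) :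
    LipCurve (fun a b : X => dist a b) (curveAppend γ₁ γ₂) := by
  obtain ⟨K₁, hK₁⟩ := h₁
  obtain ⟨K₂, hK₂⟩ := h₂
  refine ⟨2 * max K₁ K₂, dist_le_mul_of_Icc_union (m := 1 / 2) ?_ ?_⟩
  · intro s hs t ht
    rw [curveAppend_eqOn_left γ₁ γ₂ hs, curveAppend_eqOn_left γ₁ γ₂ ht]
    refine (hK₁ _ ⟨by linarith [hs.1], by linarith [hs.2]⟩ _
      ⟨by linarith [ht.1], by linarith [ht.2]⟩).trans ?_
    rw [show 2 * s + 0 - (2 * t + 0) = 2 * (s - t) by ring, abs_mul, abs_two]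
    nlinarith [le_max_left K₁ K₂, abs_nonneg (s - t)]
  · intro s hs t ht
    rw [curveAppend_eqOn_right h hs, curveAppend_eqOn_right h ht]
    refine (hK₂ _ ⟨by linarith [hs.1], by linarith [hs.2]⟩ _
      ⟨by linarith [ht.1], by linarith [ht.2]⟩).trans ?_
    rw [show 2 * s + -1 - (2 * t + -1) = 2 * (s - t) by ring, abs_mul, abs_two]
    nlinarith [le_max_right K₁ K₂, abs_nonneg (s - t)]

lemma LipCurve.exists_pos_dist_le {γ : ℝ → X} (hγ : LipCurve (fun a b : X => dist a b) γ)
    {η : ℝ} (hη : 0 < η) :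
    ∃ r > 0, ∀ s ∈ Icc (0 : ℝ) 1, ∀ t ∈ Icc (0 : ℝ) 1, |s - t| ≤ r → dist (γ s) (γ t) ≤ η := by
  obtain ⟨K, hK⟩ := hγ
  have hK' : 0 < max K 0 + 1 := by positivity
  refine ⟨η / (max K 0 + 1), by positivity, fun s hs t ht hst => (hK s hs t ht).trans ?_⟩
  calc K * |s - t| ≤ (max K 0 + 1) * (η / (max K 0 + 1)) :=
        mul_le_mul (by linarith [le_max_left K 0]) hst (abs_nonneg _) hK'.le
    _ = η := mul_div_cancel₀ η hK'.ne'

lemma PseudoDist.continuous (ρ : PseudoDist X) {C : ℝ≥0} (hC : ∀ x y, ρ.d x y ≤ C * dist x y) :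
    Continuous fun p : X × X => ρ.d p.1 p.2 := by
  refine (LipschitzWith.of_dist_le_mul (K := 2 * C) fun p q => ?_).continuous
  rw [Real.dist_eq, Prod.dist_eq, NNReal.coe_mul, NNReal.coe_two]
  refine (ρ.abs_sub_le _ _ _ _).trans ?_
  have := hC p.1 q.1
  have := hC p.2 q.2
  have : 0 ≤ (C : ℝ) := C.2
  nlinarith [le_max_left (dist p.1 q.1) (dist p.2 q.2), le_max_right (dist p.1 q.1) (dist p.2 q.2)]

lemma PseudoDist.pathLength_le_liminf (ρ : PseudoDist X) {C : ℝ≥0}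
    (hC : ∀ x y, ρ.d x y ≤ C * dist x y) {γn : ℕ → ℝ → X} {γ : ℝ → X}
    (h : ∀ t ∈ Icc (0 : ℝ) 1, Tendsto (fun n => γn n t) atTop (𝓝 (γ t))) :
    pathLength ρ.d γ ≤ liminf (fun n => pathLength ρ.d (γn n)) atTop := by
  have hlip : LipschitzWith C (ρ.toSpace id) := fun x y =>
    calc edist (ρ.toSpace id x) (ρ.toSpace id y) ≤ ENNReal.ofReal (C * dist x y) :=
          ENNReal.ofReal_le_ofReal (hC x y)
      _ = C * edist x y := by
          rw [ENNReal.ofReal_mul C.coe_nonneg, ENNReal.ofReal_coe_nnreal, edist_dist]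
  simp only [pathLength, ρ.pathLengthOn_eq_eVariationOn _ zero_le_one]
  refine le_of_forall_lt_imp_le_of_dense fun v hv => le_liminf_of_le (by isBoundedDefault) ?_
  exact (eVariationOn.lowerSemicontinuous_aux (F := fun n => ρ.toSpace (γn n))
    (fun t ht => (hlip.continuous.tendsto _).comp (h t ht)) hv).mono fun n hn => hn.le

end Metric

lemma tendstoUnifCompactly_of_monotone {E : Type*} [TopologicalSpace E] {F : ℕ → E → E → ℝ}
    {f : E → E → ℝ} (hmono : Monotone F) (hF : ∀ n, Continuous fun p : E × E => F n p.1 p.2)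
    (hf : Continuous fun p : E × E => f p.1 p.2)
    (hlim : ∀ x y, Tendsto (fun n => F n x y) atTop (𝓝 (f x y))) : TendstoUnifCompactly F f := by
  intro K hK ε hε
  have hunif := Monotone.tendstoUniformlyOn_of_forall_tendsto hK
    (F := fun n (p : E × E) => F n p.1 p.2) (fun n => (hF n).continuousOn)
    (fun p _ m n hmn => hmono hmn p.1 p.2) hf.continuousOn (fun p _ => hlim p.1 p.2)
  obtain ⟨N, hN⟩ := eventually_atTop.1 (Metric.tendstoUniformlyOn_iff.1 hunif ε hε)
  exact ⟨N, fun n hn p hp => by simpa [Real.dist_eq, abs_sub_comm] using hN n hn p hp⟩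

/-! ### The induced length distance -/

section InducedDist

variable {X : Type*} [PseudoMetricSpace X] (ρ : PseudoDist X)

noncomputable def inducedEDist (x y : X) : ℝ≥0∞ :=
  ⨅ (γ : ℝ → X) (_ : LipCurve (fun a b : X => dist a b) γ ∧ γ 0 = x ∧ γ 1 = y),
    pathLength ρ.d γ

lemma inducedEDist_le_pathLength {γ : ℝ → X} (hγ : LipCurve (fun a b : X => dist a b) γ) :
    inducedEDist ρ (γ 0) (γ 1) ≤ pathLength ρ.d γ :=
  iInf₂_le γ ⟨hγ, rfl, rfl⟩

lemma ofReal_le_inducedEDist (x y : X) : ENNReal.ofReal (ρ.d x y) ≤ inducedEDist ρ x y :=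
  le_iInf₂ fun γ ⟨_, h0, h1⟩ => h0 ▸ h1 ▸
    ρ.ofReal_le_pathLengthOn γ (left_mem_Icc.2 zero_le_one) (right_mem_Icc.2 zero_le_one)

lemma inducedEDist_self (x : X) : inducedEDist ρ x x = 0 :=
  nonpos_iff_eq_zero.1 <|
    (inducedEDist_le_pathLength ρ (lipCurve_const x)).trans (ρ.pathLength_const x).le

lemma inducedEDist_comm (x y : X) : inducedEDist ρ x y = inducedEDist ρ y x := by
  suffices h : ∀ x y, inducedEDist ρ x y ≤ inducedEDist ρ y x from le_antisymm (h x y) (h y x)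
  refine fun x y => le_iInf₂ fun γ ⟨hγ, h0, h1⟩ => ?_
  rw [← ρ.pathLength_comp_one_sub]
  simpa [h0, h1] using inducedEDist_le_pathLength ρ hγ.comp_one_sub

lemma inducedEDist_triangle (x y z : X) :
    inducedEDist ρ x z ≤ inducedEDist ρ x y + inducedEDist ρ y z :=
  ENNReal.le_iInf₂_add_iInf₂ fun γ₁ ⟨hγ₁, h₁0, h₁1⟩ γ₂ ⟨hγ₂, h₂0, h₂1⟩ => by
    have h : γ₁ 1 = γ₂ 0 := h₁1.trans h₂0.symm
    rw [← ρ.pathLength_curveAppend h]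
    have key := inducedEDist_le_pathLength ρ (hγ₁.append hγ₂ h)
    norm_num [curveAppend, h₁0, h₂1] at key
    exact key

lemma inducedEDist_le_pathLengthOn {γ : ℝ → X} (hγ : LipCurve (fun a b : X => dist a b) γ)
    {s t : ℝ} (hs : 0 ≤ s) (hst : s ≤ t) (ht : t ≤ 1) :
    inducedEDist ρ (γ s) (γ t) ≤ pathLengthOn ρ.d γ s t := by
  rcases hst.eq_or_lt with rfl | hst'
  · simp [inducedEDist_self]
  have h := inducedEDist_le_pathLength ρ (hγ.comp_affine hs hst ht)
  rw [pathLength, ρ.pathLengthOn_comp_affine γ (sub_pos.2 hst') zero_le_one] at h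
  simpa using h

lemma inducedEDist_mono {ρ' : PseudoDist X} (h : ∀ x y, ρ.d x y ≤ ρ'.d x y) (x y : X) :
    inducedEDist ρ x y ≤ inducedEDist ρ' x y :=
  iInf₂_mono fun γ _ => pathLengthOn_mono h γ 0 1

noncomputable def PseudoDist.induced (hfin : ∀ x y, inducedEDist ρ x y ≠ ⊤) : PseudoDist X where
  d x y := (inducedEDist ρ x y).toReal
  self x := by simp [inducedEDist_self]
  comm x y := by rw [inducedEDist_comm]
  triangle x y z := by
    rw [← ENNReal.toReal_add (hfin x y) (hfin y z)]
    exact ENNReal.toReal_mono (ENNReal.add_ne_top.2 ⟨hfin x y, hfin y z⟩)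
      (inducedEDist_triangle ρ x y z)

variable {ρ} {hfin : ∀ x y, inducedEDist ρ x y ≠ ⊤}

lemma ofReal_induced (x y : X) : ENNReal.ofReal ((ρ.induced hfin).d x y) = inducedEDist ρ x y :=
  ENNReal.ofReal_toReal (hfin x y)

lemma le_induced (x y : X) : ρ.d x y ≤ (ρ.induced hfin).d x y :=
  (ENNReal.ofReal_le_ofReal_iff ENNReal.toReal_nonneg).1 <| by
    rw [ENNReal.ofReal_toReal (hfin x y)]; exact ofReal_le_inducedEDist ρ x y

lemma pathLength_induced_le {γ : ℝ → X} (hγ : LipCurve (fun a b : X => dist a b) γ) :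
    pathLength (ρ.induced hfin).d γ ≤ pathLength ρ.d γ :=
  ρ.pathLengthOn_le_of_chord_le γ fun s t hs hst ht => by
    rw [ofReal_induced, inducedEDist_comm]
    exact inducedEDist_le_pathLengthOn ρ hγ hs hst ht

lemma isLengthDist_induced {C : ℝ} (hC : 0 ≤ C)
    (hle : ∀ x y, (ρ.induced hfin).d x y ≤ C * dist x y) : IsLengthDist (ρ.induced hfin).d := by
  intro x y
  refine le_antisymm (le_iInf fun γ => le_iInf fun _ => le_iInf fun h0 => le_iInf fun h1 => ?_) ?_
  · exact h0 ▸ h1 ▸ (ρ.induced hfin).ofReal_le_pathLengthOn γ (left_mem_Icc.2 zero_le_one)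
      (right_mem_Icc.2 zero_le_one)
  · rw [ofReal_induced]
    exact le_iInf₂ fun γ ⟨hγ, h0, h1⟩ => iInf_le_of_le γ <| iInf_le_of_le (hγ.mono hC hle) <|
      iInf_le_of_le h0 <| iInf_le_of_le h1 (pathLength_induced_le hγ)

end InducedDist

lemma memD_induced {X : Type*} [MetricSpace X] {Ω : Set X} {α : ℝ} (hα : 0 < α)
    {ρ : PseudoDist Ω} {hfin : ∀ x y, inducedEDist ρ x y ≠ ⊤}
    (hlow : ∀ x y, α⁻¹ * dist x y ≤ ρ.d x y) (hup : ∀ x y, (ρ.induced hfin).d x y ≤ α * dist x y) :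
    MemD α Ω (ρ.induced hfin).d := by
  refine ⟨(ρ.induced hfin).isDistance fun x y hxy => ?_, isLengthDist_induced hα.le hup,
    fun x y => ⟨(hlow x y).trans (le_induced x y), hup x y⟩⟩
  have := (hlow x y).trans ((le_induced x y).trans hxy.le)
  have := inv_pos.2 hα
  exact dist_le_zero.1 (by nlinarith [dist_nonneg (x := x) (y := y)])


section Segment

variable {E : Type*} [NormedAddCommGroup E] [NormedSpace ℝ E] {Ω : Set E}

section

variable (hΩ : Convex ℝ Ω) (x y : Ω)

noncomputable def segmentCurve (s : ℝ) : Ω :=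
  ⟨x + (projIcc 0 1 zero_le_one s : ℝ) • ((y : E) - x),
    hΩ.add_smul_sub_mem x.2 y.2 (projIcc 0 1 zero_le_one s).2⟩

lemma segmentCurve_zero : segmentCurve hΩ x y 0 = x := by simp [segmentCurve]

lemma segmentCurve_one : segmentCurve hΩ x y 1 = y := by simp [segmentCurve]

lemma segmentCurve_mem_segment (s : ℝ) : (segmentCurve hΩ x y s : E) ∈ segment ℝ (x : E) y := by
  rw [segment_eq_image']
  exact ⟨_, (projIcc 0 1 zero_le_one s).2, rfl⟩

lemma dist_segmentCurve {s t : ℝ} (hs : s ∈ Icc (0 : ℝ) 1) (ht : t ∈ Icc (0 : ℝ) 1) :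
    dist (segmentCurve hΩ x y s) (segmentCurve hΩ x y t) = dist x y * |s - t| := by
  have h : (segmentCurve hΩ x y s : E) - segmentCurve hΩ x y t = (s - t) • ((y : E) - x) := by
    simp [segmentCurve, projIcc_of_mem _ hs, projIcc_of_mem _ ht, sub_smul]
  rw [Subtype.dist_eq, dist_eq_norm, h, norm_smul, Real.norm_eq_abs, ← dist_eq_norm', mul_comm,
    Subtype.dist_eq]

lemma lipCurve_segmentCurve : LipCurve (fun a b : Ω => dist a b) (segmentCurve hΩ x y) :=
  ⟨dist x y, fun _ hs _ ht => (dist_segmentCurve hΩ x y hs ht).le⟩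

end

lemma inducedEDist_le_of_segment (hΩ : Convex ℝ Ω) (ρ : PseudoDist Ω) (x y : Ω) {C : ℝ}
    (hC : 0 ≤ C)
    (h : ∀ p q : Ω, (p : E) ∈ segment ℝ (x : E) y → (q : E) ∈ segment ℝ (x : E) y →
      ρ.d p q ≤ C * dist p q) :
    inducedEDist ρ x y ≤ ENNReal.ofReal (C * dist x y) := by
  have hle := inducedEDist_le_pathLength ρ (lipCurve_segmentCurve hΩ x y)
  rw [segmentCurve_zero, segmentCurve_one] at hle
  refine hle.trans <| le_of_le_of_eq
    (ρ.pathLengthOn_le_mul _ (C := C * dist x y) (by positivity) zero_le_one fun s hs t ht => ?_)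
    (by norm_num)
  rw [mul_assoc, ← dist_segmentCurve hΩ x y hs ht]
  exact h _ _ (segmentCurve_mem_segment hΩ x y s) (segmentCurve_mem_segment hΩ x y t)

end Segment

lemma inducedEDist_twoDist {E : Type*} [NormedAddCommGroup E] [NormedSpace ℝ E] {Ω : Set E}
    (hΩ : Convex ℝ Ω) (x y : Ω) :
    inducedEDist (PseudoDist.twoDist Ω) x y = ENNReal.ofReal (2 * dist x y) :=
  le_antisymm (inducedEDist_le_of_segment hΩ _ x y two_pos.le fun _ _ _ _ => le_rfl)
    (ofReal_le_inducedEDist _ x y)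

lemma memD_twoDist {E : Type*} [NormedAddCommGroup E] [NormedSpace ℝ E] {Ω : Set E}
    (hΩ : Convex ℝ Ω) : MemD 2 Ω (PseudoDist.twoDist Ω).d := by
  have hfin : ∀ x y, inducedEDist (PseudoDist.twoDist Ω) x y ≠ ⊤ := fun x y => by
    rw [inducedEDist_twoDist hΩ]
    exact ENNReal.ofReal_ne_top
  have h : ((PseudoDist.twoDist Ω).induced hfin).d = (PseudoDist.twoDist Ω).d := by
    funext x y
    show (inducedEDist _ x y).toReal = _
    rw [inducedEDist_twoDist hΩ, ENNReal.toReal_ofReal (by positivity)]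
    rfl
  rw [← h]
  refine memD_induced two_pos (fun x y => ?_) fun x y => by rw [h]; rfl
  simp only [PseudoDist.twoDist]
  linarith [dist_nonneg (x := x) (y := y)]


section Toll

variable {X : Type*} [PseudoMetricSpace X] {f g : X → ℝ}

def PseudoDist.toll (f : X → ℝ) (hf₀ : ∀ x, 0 ≤ f x) (hf : LipschitzWith 1 f) : PseudoDist X where
  d x y := min (2 * dist x y) (dist x y + f x + f y)
  self x := by simp [hf₀ x]
  comm x y := by rw [dist_comm]; ring_nf
  triangle x y z := by
    have hf' : ∀ a b, |f a - f b| ≤ dist a b := fun a b => by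
      simpa [Real.dist_eq] using hf.dist_le_mul a b
    have hxy := abs_le.1 (hf' x y)
    have hyz := abs_le.1 (hf' y z)
    have hxz := dist_triangle x y z
    have hy := hf₀ y
    have hA := min_le_left (2 * dist x z) (dist x z + f x + f z)
    have hB := min_le_right (2 * dist x z) (dist x z + f x + f z)
    rcases min_cases (2 * dist x y) (dist x y + f x + f y) with ⟨h₁, -⟩ | ⟨h₁, -⟩ <;>
      rcases min_cases (2 * dist y z) (dist y z + f y + f z) with ⟨h₂, -⟩ | ⟨h₂, -⟩ <;>
      rw [h₁, h₂] <;> linarith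

variable {hf₀ : ∀ x, 0 ≤ f x} {hf : LipschitzWith 1 f}

lemma dist_le_toll (x y : X) : dist x y ≤ (PseudoDist.toll f hf₀ hf).d x y :=
  le_min (by linarith [dist_nonneg (x := x) (y := y)]) (by linarith [hf₀ x, hf₀ y])

lemma toll_le_two_mul_dist (x y : X) : (PseudoDist.toll f hf₀ hf).d x y ≤ 2 * dist x y :=
  min_le_left _ _

lemma toll_eq_dist {x y : X} (hx : f x = 0) (hy : f y = 0) :
    (PseudoDist.toll f hf₀ hf).d x y = dist x y := by
  simp only [PseudoDist.toll, hx, hy, add_zero]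
  exact min_eq_right (by linarith [dist_nonneg (x := x) (y := y)])

lemma toll_eq_two_mul_dist {x y : X} (h : dist x y ≤ f x + f y) :
    (PseudoDist.toll f hf₀ hf).d x y = 2 * dist x y :=
  min_eq_left (by linarith)

lemma toll_mono {hg₀ : ∀ x, 0 ≤ g x} {hg : LipschitzWith 1 g} (hfg : ∀ x, f x ≤ g x) (x y : X) :
    (PseudoDist.toll f hf₀ hf).d x y ≤ (PseudoDist.toll g hg₀ hg).d x y :=
  min_le_min le_rfl (by linarith [hfg x, hfg y])

end Toll

/-! ### The unit square -/

local notation "ℝ²" => EuclideanSpace ℝ (Fin 2)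

def unitSquare : Set ℝ² := {p | p 0 ∈ Ioo (0 : ℝ) 1 ∧ p 1 ∈ Ioo (0 : ℝ) 1}

lemma convex_unitSquare : Convex ℝ unitSquare :=
  ((convex_Ioo 0 1).linear_preimage (EuclideanSpace.proj 0 : ℝ² →L[ℝ] ℝ).toLinearMap).inter
    ((convex_Ioo 0 1).linear_preimage (EuclideanSpace.proj 1 : ℝ² →L[ℝ] ℝ).toLinearMap)

lemma abs_sub_height_le (p q : ℝ²) : |p 1 - q 1| ≤ dist p q := by
  simpa [Real.dist_eq] using PiLp.dist_apply_le p q 1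

noncomputable def stripFee (ε : ℝ) (p : unitSquare) : ℝ := max ((p : ℝ²) 1 - ε) 0

lemma lipschitzWith_stripFee (ε : ℝ) : LipschitzWith 1 (stripFee ε) :=
  LipschitzWith.of_dist_le_mul fun p q => by
    rw [Real.dist_eq, NNReal.coe_one, one_mul]
    refine (abs_max_sub_max_le_abs _ _ _).trans ?_
    rw [sub_sub_sub_cancel_right]
    exact abs_sub_height_le p q

noncomputable def stripDist (ε : ℝ) : PseudoDist unitSquare :=
  PseudoDist.toll (stripFee ε) (fun _ => le_max_right _ _) (lipschitzWith_stripFee ε)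

lemma inducedEDist_stripDist_le (ε : ℝ) (x y : unitSquare) :
    inducedEDist (stripDist ε) x y ≤ ENNReal.ofReal (2 * dist x y) :=
  inducedEDist_le_of_segment convex_unitSquare _ x y two_pos.le fun p q _ _ =>
    toll_le_two_mul_dist p q

noncomputable def approxDist (ε : ℝ) : PseudoDist unitSquare :=
  (stripDist ε).induced fun x y =>
    ne_top_of_le_ne_top ENNReal.ofReal_ne_top (inducedEDist_stripDist_le ε x y)

lemma approxDist_le_two_mul_dist (ε : ℝ) (x y : unitSquare) :
    (approxDist ε).d x y ≤ 2 * dist x y :=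
  ENNReal.toReal_le_of_le_ofReal (by positivity) (inducedEDist_stripDist_le ε x y)

lemma dist_le_stripDist (ε : ℝ) (x y : unitSquare) : dist x y ≤ (stripDist ε).d x y :=
  dist_le_toll x y

lemma dist_le_approxDist (ε : ℝ) (x y : unitSquare) : dist x y ≤ (approxDist ε).d x y :=
  (dist_le_stripDist ε x y).trans (le_induced x y)

lemma memD_approxDist (ε : ℝ) : MemD 2 unitSquare (approxDist ε).d :=
  memD_induced two_pos (fun x y => by
      linarith [dist_le_stripDist ε x y, dist_nonneg (x := x) (y := y)])
    (approxDist_le_two_mul_dist ε)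

lemma approxDist_anti {ε ε' : ℝ} (h : ε' ≤ ε) (x y : unitSquare) :
    (approxDist ε).d x y ≤ (approxDist ε').d x y :=
  ENNReal.toReal_mono (ne_top_of_le_ne_top ENNReal.ofReal_ne_top (inducedEDist_stripDist_le ε' x y))
    (inducedEDist_mono _ (toll_mono fun p => max_le_max (by linarith) le_rfl) x y)

lemma approxDist_le_dist {ε : ℝ} {x y : unitSquare} (hx : (x : ℝ²) 1 ≤ ε) (hy : (y : ℝ²) 1 ≤ ε) :
    (approxDist ε).d x y ≤ dist x y := by
  have hstrip : Convex ℝ {p : ℝ² | p 1 ≤ ε} :=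
    convex_halfSpace_le (EuclideanSpace.proj (1 : Fin 2) : ℝ² →L[ℝ] ℝ).toLinearMap.isLinear ε
  have hfee : ∀ p : unitSquare, (p : ℝ²) ∈ segment ℝ (x : ℝ²) y → stripFee ε p = 0 :=
    fun p hp => max_eq_right (sub_nonpos.2 (hstrip.segment_subset hx hy hp))
  refine ENNReal.toReal_le_of_le_ofReal dist_nonneg ?_
  simpa using inducedEDist_le_of_segment convex_unitSquare (stripDist ε) x y zero_le_one
    fun p q hp hq => (toll_eq_dist (hfee p hp) (hfee q hq)).le.trans (one_mul _).ge

/-- A curve that dips into the strip has to climb back out; one that stays high pays `2 dist` at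
small scales. -/
lemma two_mul_dist_le_approxDist {ε : ℝ} (hε : 0 < ε) {x y : unitSquare}
    (hx : 4 * ε ≤ (x : ℝ²) 1) (hy : 4 * ε ≤ (y : ℝ²) 1) (hxy : dist x y ≤ ε) :
    2 * dist x y ≤ (approxDist ε).d x y := by
  rw [← ENNReal.ofReal_le_ofReal_iff ((approxDist ε).nonneg x y), approxDist, ofReal_induced]
  refine le_iInf₂ fun γ ⟨hγ, h0, h1⟩ => ?_
  subst h0 h1
  by_cases hdip : ∃ s ∈ Icc (0 : ℝ) 1, (γ s : ℝ²) 1 ≤ 3 * ε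
  · obtain ⟨s, hs, hlow⟩ := hdip
    have hclimb : ∀ p q : unitSquare, |(p : ℝ²) 1 - (q : ℝ²) 1| ≤ (stripDist ε).d p q :=
      fun p q => (abs_sub_height_le p q).trans (dist_le_stripDist ε p q)
    have h₁ := abs_le.1 (hclimb (γ 0) (γ s))
    have h₂ := abs_le.1 (hclimb (γ s) (γ 1))
    calc ENNReal.ofReal (2 * dist (γ 0) (γ 1))
        ≤ ENNReal.ofReal ((stripDist ε).d (γ 0) (γ s) + (stripDist ε).d (γ s) (γ 1)) :=
          ENNReal.ofReal_le_ofReal (by linarith)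
      _ ≤ pathLengthOn (stripDist ε).d γ 0 s + pathLengthOn (stripDist ε).d γ s 1 :=
          ENNReal.ofReal_add_le.trans <| add_le_add
            ((stripDist ε).ofReal_le_pathLengthOn γ ⟨le_rfl, hs.1⟩ ⟨hs.1, le_rfl⟩)
            ((stripDist ε).ofReal_le_pathLengthOn γ ⟨le_rfl, hs.2⟩ ⟨hs.2, le_rfl⟩)
      _ = pathLength (stripDist ε).d γ := (stripDist ε).pathLengthOn_add γ hs.1 hs.2
  · simp only [not_exists, not_and, not_le] at hdip
    obtain ⟨r, hr, hγr⟩ := hγ.exists_pos_dist_le (η := 4 * ε) (by positivity)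
    refine (stripDist ε).ofReal_le_pathLengthOn_of_locally_le γ (PseudoDist.twoDist _)
      zero_le_one hr fun s hs t ht hst => (toll_eq_two_mul_dist ?_).ge
    have := hγr s hs t ht hst
    have := le_max_left ((γ s : ℝ²) 1 - ε) 0
    have := le_max_left ((γ t : ℝ²) 1 - ε) 0
    simp only [stripFee]
    linarith [hdip s hs, hdip t ht]

lemma LipCurve.exists_pos_le_height {γ : ℝ → unitSquare}
    (hγ : LipCurve (fun a b : unitSquare => dist a b) γ) :
    ∃ δ > 0, ∀ t ∈ Icc (0 : ℝ) 1, δ ≤ (γ t : ℝ²) 1 := by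
  obtain ⟨s, -, hmin⟩ := isCompact_Icc.exists_isMinOn (nonempty_Icc.2 zero_le_one)
    ((by fun_prop : Continuous fun p : unitSquare => (p : ℝ²) 1).comp_continuousOn hγ.continuousOn)
  exact ⟨_, (γ s).2.2.1, fun t ht => hmin ht⟩

lemma pathLength_twoDist_le_approxDist {ε : ℝ} (hε : 0 < ε) {γ : ℝ → unitSquare}
    (hγ : LipCurve (fun a b : unitSquare => dist a b) γ)
    (hheight : ∀ t ∈ Icc (0 : ℝ) 1, 4 * ε ≤ (γ t : ℝ²) 1) :
    pathLength (PseudoDist.twoDist unitSquare).d γ ≤ pathLength (approxDist ε).d γ := by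
  obtain ⟨r, hr, hγr⟩ := hγ.exists_pos_dist_le hε
  exact (approxDist ε).pathLengthOn_le_of_locally_le γ _ hr fun s hs t ht hst =>
    two_mul_dist_le_approxDist hε (hheight s hs) (hheight t ht) (hγr s hs t ht hst)

noncomputable def stripWidth (n : ℕ) : ℝ := 1 / ((n : ℝ) + 8)

lemma stripWidth_pos (n : ℕ) : 0 < stripWidth n := by unfold stripWidth; positivity

lemma stripWidth_le (n : ℕ) : stripWidth n ≤ 1 / 8 :=
  one_div_le_one_div_of_le (by norm_num) (by linarith [n.cast_nonneg (α := ℝ)])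

lemma stripWidth_anti : Antitone stripWidth := fun _ _ h =>
  one_div_le_one_div_of_le (by positivity) (by simpa using h)

lemma eventually_stripWidth_le {δ : ℝ} (hδ : 0 < δ) : ∀ᶠ n in atTop, stripWidth n ≤ δ := by
  obtain ⟨N, hN⟩ := exists_nat_one_div_lt hδ
  refine eventually_atTop.2 ⟨N, fun n hn => (?_ : stripWidth n ≤ 1 / ((N : ℝ) + 1)).trans hN.le⟩
  have : (N : ℝ) ≤ n := Nat.cast_le.2 hn
  exact one_div_le_one_div_of_le (by positivity) (by linarith)

noncomputable def seqDist (n : ℕ) : PseudoDist unitSquare := approxDist (stripWidth n)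

lemma monotone_seqDist : Monotone fun n => (seqDist n).d :=
  fun _ _ h x y => approxDist_anti (stripWidth_anti h) x y

lemma bddAbove_seqDist (x y : unitSquare) : BddAbove (range fun n => (seqDist n).d x y) :=
  ⟨2 * dist x y, forall_mem_range.2 fun _ => approxDist_le_two_mul_dist _ x y⟩

noncomputable def limitDist : PseudoDist unitSquare where
  d x y := ⨆ n, (seqDist n).d x y
  self x := by simp [PseudoDist.self]
  comm x y := by simp only [PseudoDist.comm (seqDist _) x y]
  triangle x y z := ciSup_le fun n => ((seqDist n).triangle x y z).trans <|
    add_le_add (le_ciSup (bddAbove_seqDist x y) n) (le_ciSup (bddAbove_seqDist y z) n)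

lemma limitDist_le_two_mul_dist (x y : unitSquare) : limitDist.d x y ≤ 2 * dist x y :=
  ciSup_le fun _ => approxDist_le_two_mul_dist _ x y

lemma tendsto_seqDist (x y : unitSquare) :
    Tendsto (fun n => (seqDist n).d x y) atTop (𝓝 (limitDist.d x y)) :=
  tendsto_atTop_ciSup (fun _ _ h => monotone_seqDist h x y) (bddAbove_seqDist x y)

lemma isDistance_limitDist : IsDistance limitDist.d :=
  limitDist.isDistance fun x y h => by
    have := (dist_le_approxDist _ x y).trans ((le_ciSup (bddAbove_seqDist x y) 0).trans h.le)
    exact dist_le_zero.1 this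

lemma tendstoUnifCompactly_seqDist : TendstoUnifCompactly (fun n => (seqDist n).d) limitDist.d :=
  tendstoUnifCompactly_of_monotone monotone_seqDist
    (fun n => (seqDist n).continuous (C := 2) fun x y => by
      simpa [seqDist] using approxDist_le_two_mul_dist _ x y)
    (limitDist.continuous (C := 2) fun x y => by simpa using limitDist_le_two_mul_dist x y)
    tendsto_seqDist

noncomputable def squarePoint (a b : ℝ) (ha : a ∈ Ioo (0 : ℝ) 1) (hb : b ∈ Ioo (0 : ℝ) 1) :
    unitSquare :=
  ⟨!₂[a, b], by simpa using ha, by simpa using hb⟩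

lemma dist_squarePoint {a b c d : ℝ} {ha hb hc hd} :
    dist (squarePoint a b ha hb) (squarePoint c d hc hd) = √((a - c) ^ 2 + (b - d) ^ 2) := by
  simp [squarePoint, Subtype.dist_eq, EuclideanSpace.dist_eq, Fin.sum_univ_two, Real.dist_eq,
    sq_abs]

/-- Down into the strip, across at unit speed and back up. -/
lemma seqDist_le_three_fourths (n : ℕ) :
    (seqDist n).d (squarePoint (1 / 4) (1 / 16) (by norm_num) (by norm_num))
      (squarePoint (3 / 4) (1 / 16) (by norm_num) (by norm_num)) ≤ 3 / 4 := by
  set ε := stripWidth n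
  have hε := stripWidth_pos n
  have hε' := stripWidth_le n
  have hlow : ε / 2 ∈ Ioo (0 : ℝ) 1 := ⟨by linarith, by linarith⟩
  set x := squarePoint (1 / 4) (1 / 16) (by norm_num) (by norm_num)
  set y := squarePoint (3 / 4) (1 / 16) (by norm_num) (by norm_num)
  set x' := squarePoint (1 / 4) (ε / 2) (by norm_num) hlow
  set y' := squarePoint (3 / 4) (ε / 2) (by norm_num) hlow
  have hxx' : dist x x' ≤ 1 / 16 := by
    rw [dist_squarePoint, sub_self, sq, zero_mul, zero_add, Real.sqrt_sq_eq_abs, abs_le]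
    constructor <;> linarith
  have hx'y' : dist x' y' = 1 / 2 := by
    rw [dist_squarePoint, sub_self,
      show ((1 : ℝ) / 4 - 3 / 4) ^ 2 + 0 ^ 2 = (1 / 2) ^ 2 by norm_num, Real.sqrt_sq (by norm_num)]
  have hy'y : dist y' y ≤ 1 / 16 := by
    rw [dist_squarePoint, sub_self, sq, zero_mul, zero_add, Real.sqrt_sq_eq_abs, abs_le]
    constructor <;> linarith
  have h₁ := approxDist_le_two_mul_dist ε x x'
  have h₂ : (approxDist ε).d x' y' ≤ dist x' y' :=
    approxDist_le_dist (by simp [x', squarePoint]; linarith) (by simp [y', squarePoint]; linarith)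
  have h₃ := approxDist_le_two_mul_dist ε y' y
  have := (approxDist ε).triangle x x' y
  have := (approxDist ε).triangle x' y' y
  simp only [seqDist]
  linarith

lemma limitDist_ne_twoDist : limitDist.d ≠ (PseudoDist.twoDist unitSquare).d := by
  intro h
  have hle := ciSup_le seqDist_le_three_fourths
  have := congrFun (congrFun h (squarePoint (1 / 4) (1 / 16) (by norm_num) (by norm_num)))
    (squarePoint (3 / 4) (1 / 16) (by norm_num) (by norm_num))
  simp only [limitDist, PseudoDist.twoDist] at this
  rw [this, dist_squarePoint] at hle
  norm_num at hle

lemma pathLength_twoDist_le_liminf_seqDist {γn : ℕ → ℝ → unitSquare} {γ : ℝ → unitSquare}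
    (hγn : ∀ n, LipCurve (fun a b : unitSquare => dist a b) (γn n))
    (hγ : LipCurve (fun a b : unitSquare => dist a b) γ) (hconv : UnifConvCurves γn γ) :
    pathLength (PseudoDist.twoDist unitSquare).d γ
      ≤ liminf (fun n => pathLength (seqDist n).d (γn n)) atTop := by
  obtain ⟨δ, hδ, hγδ⟩ := hγ.exists_pos_le_height
  have hheight : ∀ᶠ n in atTop, ∀ t ∈ Icc (0 : ℝ) 1, δ / 2 ≤ (γn n t : ℝ²) 1 := by
    obtain ⟨N, hN⟩ := hconv (δ / 2) (by positivity)
    refine eventually_atTop.2 ⟨N, fun n hn t ht => ?_⟩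
    have h₁ := (abs_le.1 (abs_sub_height_le (γn n t) (γ t))).1
    have h₂ := hN n hn t ht
    rw [Subtype.dist_eq] at h₂
    linarith [hγδ t ht]
  have htwo : ∀ x y, (PseudoDist.twoDist unitSquare).d x y ≤ (2 : ℝ≥0) * dist x y := fun x y => by
    simp [PseudoDist.twoDist]
  calc pathLength (PseudoDist.twoDist unitSquare).d γ
      ≤ liminf (fun n => pathLength (PseudoDist.twoDist unitSquare).d (γn n)) atTop :=
        (PseudoDist.twoDist _).pathLength_le_liminf htwo fun t ht =>
          Metric.tendsto_atTop.2 fun ε hε => (hconv ε hε).imp fun N hN n hn => hN n hn t ht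
    _ ≤ liminf (fun n => pathLength (seqDist n).d (γn n)) atTop := by
        refine liminf_le_liminf <| (hheight.and (eventually_stripWidth_le (δ := δ / 8) ?_)).mono
          fun n ⟨h₁, h₂⟩ => pathLength_twoDist_le_approxDist (stripWidth_pos n) (hγn n)
            fun t ht => by linarith [h₁ t ht]
        positivity

lemma limsup_pathLength_seqDist_le (γ : ℝ → unitSquare) :
    limsup (fun n => pathLength (seqDist n).d γ) atTop
      ≤ pathLength (PseudoDist.twoDist unitSquare).d γ :=
  limsup_le_of_le (by isBoundedDefault) <| Eventually.of_forall fun _ =>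
    pathLengthOn_mono (approxDist_le_two_mul_dist _) γ 0 1

/-- on the open unit square `Ω = (0,1)²` with `d = 2 d_Eucl ∈ 𝒟₂(Ω)`,
there are a nondecreasing sequence `(dn) ⊆ 𝒟₂(Ω)` and a distance `d̃ ≠ d` such that
`dn → d̃` uniformly on compact sets while `L_{dn}` Γ-converges to `L_d` on
`Lip([0,1]; Ω)`. -/
theorem stmt11 (Ω : Set (EuclideanSpace ℝ (Fin 2)))
    (hΩ : Ω = {p : EuclideanSpace ℝ (Fin 2) | p 0 ∈ Ioo (0 : ℝ) 1 ∧ p 1 ∈ Ioo (0 : ℝ) 1})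
    (d : Ω → Ω → ℝ)
    (hd : ∀ x y : Ω,
      d x y = 2 * dist (x : EuclideanSpace ℝ (Fin 2)) (y : EuclideanSpace ℝ (Fin 2))) :
    MemD 2 Ω d ∧
    ∃ dn : ℕ → Ω → Ω → ℝ, (∀ n, MemD 2 Ω (dn n)) ∧
      (∀ n, ∀ x y : Ω, dn n x y ≤ dn (n + 1) x y) ∧
      ∃ dt : Ω → Ω → ℝ, IsDistance dt ∧ dt ≠ d ∧
        TendstoUnifCompactly dn dt ∧ GammaConvLengths dn d := by
  obtain rfl : Ω = unitSquare := hΩ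
  obtain rfl : d = (PseudoDist.twoDist unitSquare).d := funext fun x => funext (hd x)
  refine ⟨memD_twoDist convex_unitSquare, fun n => (seqDist n).d, fun n => memD_approxDist _,
    fun n => monotone_seqDist n.le_succ, limitDist.d, isDistance_limitDist, limitDist_ne_twoDist,
    tendstoUnifCompactly_seqDist, fun _ _ => pathLength_twoDist_le_liminf_seqDist, fun γ hγ => ?_⟩
  exact ⟨fun _ => γ, fun _ => hγ, fun ε hε => ⟨0, fun _ _ t _ => by simpa using hε⟩,
    limsup_pathLength_seqDist_le γ⟩
end

section
/- Let (X, D) be a locally compact, complete metric space, α > 1, and Ω ⊆ X an open set with D_α(Ω) ≠ ∅. Let (d_n)_{n∈ℕ} ⊆ D_α(Ω) and d ∈ D_α(Ω). If d_n → d uniformly on compact subsets of Ω × Ω, then L_{d_n} Γ-converges to L_d on Lip([0,1]; Ω) with the topology of uniform convergence: for every sequence of Lipschitz curves γⁿ : [0,1] → Ω converging uniformly to a Lipschitz curve γ : [0,1] → Ω one has L_d(γ) ≤ liminf_n L_{d_n}(γⁿ), and for every Lipschitz curve γ : [0,1] → Ω there exist Lipschitz curves γⁿ : [0,1] → Ω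 converging uniformly to γ with limsup_n L_{d_n}(γⁿ) ≤ L_d(γ). -/
open Filter MeasureTheory Set
open scoped ENNReal Topology

/-!
Lower bound: for a fixed partition of `[0, 1]`, `d_n (γⁿ s) (γⁿ t) → d (γ s) (γ t)`, since
`d_n → d` locally uniformly on the locally compact space `Ω × Ω` and `d` is continuous; so every
partition sum of `L_d(γ)` is a limit of partition sums of `L_{d_n}(γⁿ)`.

Recovery sequence: sample `γ` at the points `i / m` and join consecutive samples by almost
`d_n`-minimizing curves, which exist because `d_n` is a length distance. The resulting curve has
`d_n`-length at most `∑ d_n(xᵢ, xᵢ₊₁) + ε`, which for large `n` is close to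
`∑ d(xᵢ, xᵢ₊₁) ≤ L_d(γ)`; comparability of `d_n` with `D` keeps each piece, hence the curve,
uniformly close to `γ`. A diagonal choice of the precision as `n → ∞` gives the sequence.
-/

open scoped NNReal

section PathLength

variable {E : Type*} (d : E → E → ℝ) (γ : ℝ → E) {a b c : ℝ}

theorem sum_le_pathLengthOn {k : ℕ} {t : Fin (k + 1) → ℝ} (ht : Monotone t) (h0 : t 0 = a)
    (h1 : t (Fin.last k) = b) :
    ∑ i : Fin k, ENNReal.ofReal (d (γ (t i.succ)) (γ (t i.castSucc))) ≤ pathLengthOn d γ a b :=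
  le_iSup_of_le k <| le_iSup_of_le t <| le_iSup_of_le ht <| le_iSup_of_le h0 <|
    le_iSup_of_le h1 le_rfl

theorem pathLengthOn_le {C : ℝ≥0∞}
    (h : ∀ (k : ℕ) (t : Fin (k + 1) → ℝ), Monotone t → t 0 = a → t (Fin.last k) = b →
      ∑ i : Fin k, ENNReal.ofReal (d (γ (t i.succ)) (γ (t i.castSucc))) ≤ C) :
    pathLengthOn d γ a b ≤ C :=
  iSup_le fun k => iSup_le fun t => iSup_le fun ht => iSup_le fun h0 => iSup_le (h k t ht h0)

theorem ofReal_le_pathLengthOn (hac : a ≤ c) (hcb : c ≤ b) :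
    ENNReal.ofReal (d (γ c) (γ a)) ≤ pathLengthOn d γ a b := by
  have hmono : Monotone ![a, c, b] := by
    refine Fin.monotone_iff_le_succ.2 fun i => ?_
    fin_cases i <;> simpa
  refine le_trans ?_ (sum_le_pathLengthOn d γ hmono rfl rfl)
  simp [Fin.sum_univ_two]

theorem sum_le_pathLengthOn_of_monotone {t : ℕ → ℝ} (ht : Monotone t) (k : ℕ) :
    ∑ i ∈ Finset.range k, ENNReal.ofReal (d (γ (t (i + 1))) (γ (t i))) ≤
      pathLengthOn d γ (t 0) (t k) := by
  rw [← Fin.sum_univ_eq_sum_range (fun i => ENNReal.ofReal (d (γ (t (i + 1))) (γ (t i))))]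
  exact sum_le_pathLengthOn d γ (t := fun i : Fin (k + 1) => t i)
    (fun i j hij => ht (by simpa using hij)) rfl rfl

theorem pathLengthOn_le_of_eqOn_comp {σ : ℝ → E} {φ : ℝ → ℝ} (hφ : Monotone φ)
    (h : EqOn γ (σ ∘ φ) (Icc a b)) : pathLengthOn d γ a b ≤ pathLengthOn d σ (φ a) (φ b) := by
  refine pathLengthOn_le d γ fun k t ht h0 h1 => ?_
  have hmem : ∀ j, t j ∈ Icc a b := fun j =>
    ⟨h0 ▸ ht (Fin.zero_le j), h1 ▸ ht (Fin.le_last j)⟩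
  calc ∑ j : Fin k, ENNReal.ofReal (d (γ (t j.succ)) (γ (t j.castSucc)))
      = ∑ j : Fin k, ENNReal.ofReal (d (σ (φ (t j.succ))) (σ (φ (t j.castSucc)))) := by
        simp only [h (hmem _), Function.comp_apply]
    _ ≤ pathLengthOn d σ (φ a) (φ b) :=
        sum_le_pathLengthOn d σ (hφ.comp ht) (by simp [h0]) (by simp [h1])

variable {d}

theorem pathLengthOn_self (hrefl : ∀ x, d x x = 0) : pathLengthOn d γ a a = 0 := by
  refine le_antisymm (pathLengthOn_le d γ fun k t ht h0 h1 => ?_) zero_le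
  have hconst : ∀ i, t i = a := fun i =>
    le_antisymm (h1 ▸ ht (Fin.le_last i)) (h0 ▸ ht (Fin.zero_le i))
  simp [hconst, hrefl]

theorem ofReal_le_min_add_max (htri : ∀ x y z, d x z ≤ d x y + d y z) (hrefl : ∀ x, d x x = 0)
    {s t : ℝ} (hst : s ≤ t) :
    ENNReal.ofReal (d (γ t) (γ s)) ≤ ENNReal.ofReal (d (γ (min t b)) (γ (min s b))) +
      ENNReal.ofReal (d (γ (max t b)) (γ (max s b))) := by
  rcases le_total t b with htb | hbt
  · simp [htb, hst.trans htb, hrefl]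
  rcases le_total b s with hbs | hsb
  · simp [hbs, hbs.trans hst, hrefl]
  simp only [min_eq_right hbt, min_eq_left hsb, max_eq_left hbt, max_eq_right hsb]
  calc ENNReal.ofReal (d (γ t) (γ s))
      ≤ ENNReal.ofReal (d (γ t) (γ b) + d (γ b) (γ s)) := ENNReal.ofReal_le_ofReal (htri _ _ _)
    _ ≤ _ := by rw [add_comm]; exact ENNReal.ofReal_add_le

theorem pathLengthOn_le_add (htri : ∀ x y z, d x z ≤ d x y + d y z) (hrefl : ∀ x, d x x = 0)
    (hab : a ≤ b) (hbc : b ≤ c) :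
    pathLengthOn d γ a c ≤ pathLengthOn d γ a b + pathLengthOn d γ b c := by
  refine pathLengthOn_le d γ fun k t ht h0 h1 => ?_
  calc ∑ i : Fin k, ENNReal.ofReal (d (γ (t i.succ)) (γ (t i.castSucc)))
      ≤ ∑ i : Fin k, (ENNReal.ofReal (d (γ (min (t i.succ) b)) (γ (min (t i.castSucc) b))) +
          ENNReal.ofReal (d (γ (max (t i.succ) b)) (γ (max (t i.castSucc) b)))) :=
        Finset.sum_le_sum fun i _ =>
          ofReal_le_min_add_max γ htri hrefl (ht (Fin.castSucc_le_succ i))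
    _ ≤ pathLengthOn d γ a b + pathLengthOn d γ b c := by
        rw [Finset.sum_add_distrib]
        exact add_le_add
          (sum_le_pathLengthOn d γ (ht.min monotone_const) (by simp [h0, hab]) (by simp [h1, hbc]))
          (sum_le_pathLengthOn d γ (ht.max monotone_const) (by simp [h0, hab]) (by simp [h1, hbc]))

theorem pathLengthOn_le_sum (htri : ∀ x y z, d x z ≤ d x y + d y z) (hrefl : ∀ x, d x x = 0)
    {t : ℕ → ℝ} (ht : Monotone t) (k : ℕ) :
    pathLengthOn d γ (t 0) (t k) ≤ ∑ i ∈ Finset.range k, pathLengthOn d γ (t i) (t (i + 1)) := by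
  induction k with
  | zero => simp [pathLengthOn_self γ hrefl]
  | succ k ih =>
    rw [Finset.sum_range_succ]
    exact (pathLengthOn_le_add γ htri hrefl (ht (Nat.zero_le k)) (ht k.le_succ)).trans
      (add_le_add_left ih _)

end PathLength

section LipschitzCurves

variable {E : Type*} [PseudoMetricSpace E] {f : ℝ → E} {K : ℝ≥0}

theorem LipschitzOnWith.union_Icc {a b c : ℝ} (hab : LipschitzOnWith K f (Icc a b))
    (hbc : LipschitzOnWith K f (Icc b c)) : LipschitzOnWith K f (Icc a c) := by
  have key : ∀ s ∈ Icc a c, ∀ t ∈ Icc a c, s ≤ t → dist (f s) (f t) ≤ K * dist s t := by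
    intro s hs t ht hst
    rcases le_total t b with htb | hbt
    · exact hab.dist_le_mul s ⟨hs.1, hst.trans htb⟩ t ⟨ht.1, htb⟩
    rcases le_total b s with hbs | hsb
    · exact hbc.dist_le_mul s ⟨hbs, hs.2⟩ t ⟨hbs.trans hst, ht.2⟩
    have hsplit : dist s t = dist s b + dist b t := by
      simp only [Real.dist_eq, abs_of_nonpos (sub_nonpos.2 hsb), abs_of_nonpos (sub_nonpos.2 hbt),
        abs_of_nonpos (sub_nonpos.2 hst)]
      ring
    calc dist (f s) (f t) ≤ dist (f s) (f b) + dist (f b) (f t) := dist_triangle _ _ _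
      _ ≤ K * dist s b + K * dist b t :=
          add_le_add (hab.dist_le_mul s ⟨hs.1, hsb⟩ b ⟨hs.1.trans hsb, le_rfl⟩)
            (hbc.dist_le_mul b ⟨le_rfl, hbt.trans ht.2⟩ t ⟨hbt, ht.2⟩)
      _ = K * dist s t := by rw [hsplit, mul_add]
  refine LipschitzOnWith.of_dist_le_mul fun s hs t ht => ?_
  rcases le_total s t with hst | hts
  · exact key s hs t ht hst
  · rw [dist_comm, dist_comm s]
    exact key t ht s hs hts

theorem lipschitzOnWith_Icc_of_forall_Icc_succ {t : ℕ → ℝ} {k : ℕ}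
    (h : ∀ i < k, LipschitzOnWith K f (Icc (t i) (t (i + 1)))) :
    LipschitzOnWith K f (Icc (t 0) (t k)) := by
  induction k with
  | zero =>
    intro s hs u hu
    rw [Icc_self, mem_singleton_iff] at hs hu
    simp [hs, hu]
  | succ k ih => exact (ih fun i hi => h i (by omega)).union_Icc (h k k.lt_succ_self)

theorem LipschitzOnWith.lipCurve (h : LipschitzOnWith K f (Icc 0 1)) :
    LipCurve (fun x y : E => dist x y) f :=
  ⟨K, fun s hs t ht => by simpa only [Real.dist_eq] using h.dist_le_mul s hs t ht⟩

theorem LipCurve.exists_lipschitzOnWith {e : E → E → ℝ} {α : ℝ} (hα : 0 ≤ α)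
    (hdist : ∀ x y, dist x y ≤ α * e x y) (h : LipCurve e f) :
    ∃ K : ℝ≥0, LipschitzOnWith K f (Icc 0 1) := by
  obtain ⟨L, hL⟩ := h
  refine ⟨(α * L).toNNReal, .of_dist_le_mul fun s hs t ht => ?_⟩
  calc dist (f s) (f t) ≤ α * e (f s) (f t) := hdist _ _
    _ ≤ α * (L * |s - t|) := mul_le_mul_of_nonneg_left (hL s hs t ht) hα
    _ ≤ (α * L).toNNReal * dist s t := by
        rw [Real.dist_eq, ← mul_assoc]
        exact mul_le_mul_of_nonneg_right (Real.le_coe_toNNReal _) (abs_nonneg _)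

theorem LipCurve.exists_lipschitzOnWith_dist (h : LipCurve (fun x y : E => dist x y) f) :
    ∃ K : ℝ≥0, LipschitzOnWith K f (Icc 0 1) :=
  h.exists_lipschitzOnWith zero_le_one fun _ _ => (one_mul _).ge

end LipschitzCurves

section UniformPartition

variable {m i : ℕ} {t : ℝ}

theorem natCast_div_mem_Icc (hi : i ≤ m) : (i : ℝ) / m ∈ Icc (0 : ℝ) 1 :=
  ⟨by positivity, div_le_one_of_le₀ (by exact_mod_cast hi) (Nat.cast_nonneg m)⟩

theorem mul_sub_mem_Icc (hm : 0 < m) (ht : t ∈ Icc ((i : ℝ) / m) ((i + 1) / m)) :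
    (m : ℝ) * t - i ∈ Icc (0 : ℝ) 1 := by
  have hm' : (0 : ℝ) < m := by exact_mod_cast hm
  rw [mem_Icc, div_le_iff₀' hm', le_div_iff₀' hm'] at ht
  constructor <;> linarith [ht.1, ht.2]

theorem exists_mem_Icc_div (hm : 0 < m) (ht : t ∈ Icc (0 : ℝ) 1) :
    ∃ i < m, t ∈ Icc ((i : ℝ) / m) ((i + 1) / m) := by
  have hm' : (0 : ℝ) < m := by exact_mod_cast hm
  have hmt : 0 ≤ (m : ℝ) * t := mul_nonneg hm'.le ht.1
  refine ⟨min (m - 1) ⌊(m : ℝ) * t⌋₊, by omega, ?_⟩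
  rw [mem_Icc, div_le_iff₀' hm', le_div_iff₀' hm']
  constructor
  · exact (Nat.cast_le.2 (min_le_right _ _)).trans (Nat.floor_le hmt)
  rcases le_total ⌊(m : ℝ) * t⌋₊ (m - 1) with h | h
  · rw [min_eq_right h]
    exact (Nat.lt_floor_add_one _).le
  · rw [min_eq_left h, Nat.cast_sub hm, Nat.cast_one, sub_add_cancel]
    nlinarith [ht.2]

theorem LipschitzOnWith.dist_le_div {E : Type*} [PseudoMetricSpace E] {f : ℝ → E} {K : ℝ≥0}
    (hf : LipschitzOnWith K f (Icc 0 1)) (hi : i < m) (ht : t ∈ Icc ((i : ℝ) / m) ((i + 1) / m)) :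
    dist (f (i / m)) (f t) ≤ K / m := by
  have hm : (0 : ℝ) < m := by exact_mod_cast Nat.zero_lt_of_lt hi
  have ht01 : t ∈ Icc (0 : ℝ) 1 :=
    ⟨(natCast_div_mem_Icc hi.le).1.trans ht.1,
      ht.2.trans (by exact_mod_cast (natCast_div_mem_Icc (m := m) hi).2)⟩
  refine (hf.dist_le_mul _ (natCast_div_mem_Icc hi.le) t ht01).trans ?_
  rw [Real.dist_eq, abs_sub_comm, abs_of_nonneg (sub_nonneg.2 ht.1), div_eq_mul_one_div (K : ℝ)]
  gcongr
  linarith [ht.2, show ((i : ℝ) + 1) / m = i / m + 1 / m by ring]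

end UniformPartition

section Concatenation

variable {E : Type*} {m i : ℕ} {t : ℝ}

/-- The curves `σ 0, …, σ (m - 1)` run in turn, `σ i` rescaled to `[i / m, (i + 1) / m]`;
the `min` keeps `t = 1` on the last piece. -/
noncomputable def concatCurves (m : ℕ) (σ : ℕ → ℝ → E) (t : ℝ) : E :=
  σ (min (m - 1) ⌊m * t⌋₊) (m * t - min (m - 1) ⌊m * t⌋₊)

variable {σ : ℕ → ℝ → E}

theorem concatCurves_eq (hσ : ∀ i, σ i 1 = σ (i + 1) 0) (hi : i < m)
    (ht : t ∈ Icc ((i : ℝ) / m) ((i + 1) / m)) : concatCurves m σ t = σ i (m * t - i) := by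
  have hm : (0 : ℝ) < m := by exact_mod_cast Nat.zero_lt_of_lt hi
  rw [mem_Icc, div_le_iff₀' hm, le_div_iff₀' hm] at ht
  obtain ⟨h1, h2⟩ := ht
  unfold concatCurves
  rcases h2.lt_or_eq with h2 | h2
  · have hfloor : ⌊(m : ℝ) * t⌋₊ = i :=
      (Nat.floor_eq_iff ((Nat.cast_nonneg i).trans h1)).2 ⟨h1, h2⟩
    rw [hfloor, min_eq_right (by omega)]
  have hfloor : ⌊(m : ℝ) * t⌋₊ = i + 1 := by rw [h2]; exact_mod_cast Nat.floor_natCast (i + 1)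
  rw [hfloor, h2]
  rcases Nat.lt_or_ge (i + 1) m with h | h
  · rw [min_eq_right (by omega)]
    push_cast
    simp [hσ]
  · rw [min_eq_left (by omega), show m - 1 = i by omega]

theorem pathLength_concatCurves_le {e : E → E → ℝ} (htri : ∀ x y z, e x z ≤ e x y + e y z)
    (hrefl : ∀ x, e x x = 0) (hm : 0 < m) (hσ : ∀ i, σ i 1 = σ (i + 1) 0) :
    pathLength e (concatCurves m σ) ≤ ∑ i ∈ Finset.range m, pathLength e (σ i) := by
  have hm' : (0 : ℝ) < m := by exact_mod_cast hm
  have hsplit := pathLengthOn_le_sum (concatCurves m σ) htri hrefl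
    (t := fun i : ℕ => (i : ℝ) / m) (fun i j hij => by dsimp only; gcongr) m
  simp only [CharP.cast_eq_zero, zero_div, div_self hm'.ne', Nat.cast_add, Nat.cast_one] at hsplit
  refine hsplit.trans (Finset.sum_le_sum fun i hi => ?_)
  have hpiece := pathLengthOn_le_of_eqOn_comp e (concatCurves m σ) (φ := fun t => m * t - i)
    (fun s t hst => by dsimp only; gcongr) fun t ht => concatCurves_eq hσ (Finset.mem_range.1 hi) ht
  simpa [pathLength, mul_div_cancel₀ _ hm'.ne'] using hpiece

variable [PseudoMetricSpace E] {K : ℝ≥0}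

theorem lipschitzOnWith_concatCurves (hm : 0 < m) (hσ : ∀ i, σ i 1 = σ (i + 1) 0)
    (hlip : ∀ i < m, LipschitzOnWith K (σ i) (Icc 0 1)) :
    LipschitzOnWith (K * m) (concatCurves m σ) (Icc 0 1) := by
  have hm' : (0 : ℝ) < m := by exact_mod_cast hm
  have hpiece : ∀ i < m, LipschitzOnWith (K * m) (concatCurves m σ)
      (Icc (((i : ℕ) : ℝ) / m) (((i + 1 : ℕ) : ℝ) / m)) := by
    intro i hi
    push_cast
    refine .of_dist_le_mul fun s hs t ht => ?_
    rw [concatCurves_eq hσ hi hs, concatCurves_eq hσ hi ht]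
    calc dist (σ i (m * s - i)) (σ i (m * t - i)) ≤ K * dist ((m : ℝ) * s - i) (m * t - i) :=
          (hlip i hi).dist_le_mul _ (mul_sub_mem_Icc hm hs) _ (mul_sub_mem_Icc hm ht)
      _ = K * m * dist s t := by
          rw [Real.dist_eq, Real.dist_eq, show (m : ℝ) * s - i - (m * t - i) = m * (s - t) by ring,
            abs_mul, abs_of_pos hm', mul_assoc]
  simpa [div_self hm'.ne'] using lipschitzOnWith_Icc_of_forall_Icc_succ hpiece

end Concatenation

section Distances

variable {E : Type*} {e : E → E → ℝ}

theorem IsDistance.refl (he : IsDistance e) (x : E) : e x x = 0 :=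
  (he.2.2 x x).2 rfl

theorem IsDistance.nonneg_s13 (he : IsDistance e) (x y : E) : 0 ≤ e x y := by
  have := he.2.1 x y x
  rw [he.refl, he.1 y x] at this
  linarith

theorem IsDistance.abs_sub_le (he : IsDistance e) (x x' y y' : E) :
    |e x' y' - e x y| ≤ e x x' + e y y' := by
  obtain ⟨hsymm, htri, -⟩ := he
  rw [abs_sub_le_iff]
  constructor
  · linarith [htri x' x y', htri x y y', hsymm x x', hsymm y' y]
  · linarith [htri x x' y, htri x' y' y, hsymm y' y]

end Distances

section LengthSpaces

variable {E : Type*} {e : E → E → ℝ}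

theorem IsLengthDist.exists_pathLength_le (hlen : IsLengthDist e) (x y : E) {ε : ℝ}
    (hε : 0 < ε) : ∃ σ : ℝ → E, LipCurve e σ ∧ σ 0 = x ∧ σ 1 = y ∧
      pathLength e σ ≤ ENNReal.ofReal (e x y) + ENNReal.ofReal ε := by
  have hlt : ⨅ (σ : ℝ → E) (_ : LipCurve e σ) (_ : σ 0 = x) (_ : σ 1 = y), pathLength e σ <
      ENNReal.ofReal (e x y) + ENNReal.ofReal ε := by
    rw [← hlen x y]
    exact ENNReal.lt_add_right ENNReal.ofReal_ne_top (ENNReal.ofReal_pos.2 hε).ne'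
  simp only [iInf_lt_iff] at hlt
  obtain ⟨σ, hσ, h0, h1, hσlen⟩ := hlt
  exact ⟨σ, hσ, h0, h1, hσlen.le⟩

theorem exists_polygonal_curve [PseudoMetricSpace E] {α : ℝ} (he : IsDistance e)
    (hlen : IsLengthDist e) (hα : 0 ≤ α) (hdist : ∀ x y, dist x y ≤ α * e x y) (x : ℕ → E)
    {m : ℕ} (hm : 0 < m) {ε : ℝ} (hε : 0 < ε) :
    ∃ Γ : ℝ → E, LipCurve (fun x y : E => dist x y) Γ ∧
      (∀ i < m, ∀ t ∈ Icc ((i : ℝ) / m) ((i + 1) / m),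
        dist (Γ t) (x i) ≤ α * (e (x i) (x (i + 1)) + ε)) ∧
      pathLength e Γ ≤
        ∑ i ∈ Finset.range m, (ENNReal.ofReal (e (x i) (x (i + 1))) + ENNReal.ofReal ε) := by
  choose σ hσlip hσ0 hσ1 hσlen using fun i => hlen.exists_pathLength_le (x i) (x (i + 1)) hε
  have hjoin : ∀ i, σ i 1 = σ (i + 1) 0 := fun i => (hσ1 i).trans (hσ0 (i + 1)).symm
  choose K hK using fun i => (hσlip i).exists_lipschitzOnWith hα hdist
  refine ⟨concatCurves m σ, ?_, fun i hi t ht => ?_, (pathLength_concatCurves_le he.2.1 he.refl hm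
    hjoin).trans (Finset.sum_le_sum fun i _ => hσlen i)⟩
  · exact (lipschitzOnWith_concatCurves hm hjoin fun i hi =>
      (hK i).weaken (Finset.le_sup (Finset.mem_range.2 hi))).lipCurve
  rw [concatCurves_eq hjoin hi ht]
  have hc := mul_sub_mem_Icc hm ht
  have hstep := (ofReal_le_pathLengthOn e (σ i) hc.1 hc.2).trans (hσlen i)
  rw [hσ0, ← ENNReal.ofReal_add (he.nonneg_s13 _ _) hε.le,
    ENNReal.ofReal_le_ofReal_iff (add_nonneg (he.nonneg_s13 _ _) hε.le)] at hstep
  exact (hdist _ _).trans (mul_le_mul_of_nonneg_left hstep hα)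

end LengthSpaces

section Convergence

theorem tendstoLocallyUniformly_of_tendstoUnifCompactly {E : Type*} [TopologicalSpace E]
    [LocallyCompactSpace E] {dn : ℕ → E → E → ℝ} {d : E → E → ℝ}
    (h : TendstoUnifCompactly dn d) :
    TendstoLocallyUniformly (fun n (p : E × E) => dn n p.1 p.2) (fun p => d p.1 p.2) atTop := by
  refine tendstoLocallyUniformly_iff_forall_isCompact.2 fun K hK => ?_
  refine Metric.tendstoUniformlyOn_iff.2 fun ε hε => ?_
  obtain ⟨N, hN⟩ := h K hK ε hε
  filter_upwards [eventually_ge_atTop N] with n hn p hp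
  rw [Real.dist_eq, abs_sub_comm]
  exact hN n hn p hp

variable {E : Type*} [MetricSpace E]

theorem UnifConvCurves.tendsto {γn : ℕ → ℝ → E} {γ : ℝ → E} (h : UnifConvCurves γn γ) {t : ℝ}
    (ht : t ∈ Icc (0 : ℝ) 1) : Tendsto (fun n => γn n t) atTop (𝓝 (γ t)) :=
  Metric.tendsto_atTop.2 fun ε hε => (h ε hε).imp fun _ hN n hn => hN n hn t ht

theorem pathLength_le_liminf {dn : ℕ → E → E → ℝ} {d : E → E → ℝ}
    (hconv : TendstoLocallyUniformly (fun n (p : E × E) => dn n p.1 p.2) (fun p => d p.1 p.2) atTop)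
    (hd : Continuous fun p : E × E => d p.1 p.2) {γn : ℕ → ℝ → E} {γ : ℝ → E}
    (hγ : UnifConvCurves γn γ) :
    pathLength d γ ≤ liminf (fun n => pathLength (dn n) (γn n)) atTop := by
  refine pathLengthOn_le d γ fun k t ht h0 h1 => ?_
  have hmem : ∀ j, t j ∈ Icc (0 : ℝ) 1 := fun j =>
    ⟨h0 ▸ ht (Fin.zero_le j), h1 ▸ ht (Fin.le_last j)⟩
  have hterm : ∀ i j, Tendsto (fun n => dn n (γn n (t i)) (γn n (t j))) atTop
      (𝓝 (d (γ (t i)) (γ (t j)))) := fun i j =>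
    hconv.tendsto_comp hd.continuousAt ((hγ.tendsto (hmem i)).prodMk_nhds (hγ.tendsto (hmem j)))
  have hsum := tendsto_finsetSum Finset.univ fun (i : Fin k) _ =>
    (ENNReal.continuous_ofReal.tendsto _).comp (hterm i.succ i.castSucc)
  rw [← hsum.liminf_eq]
  exact liminf_le_liminf (Eventually.of_forall fun n => sum_le_pathLengthOn (dn n) (γn n) ht h0 h1)

end Convergence

section DistancesOnOmega

variable {X : Type*} [MetricSpace X] {Ω : Set X} {α : ℝ} {e : Ω → Ω → ℝ}

theorem MemD.dist_le_mul (he : MemD α Ω e) (hα : 0 < α) (x y : Ω) : dist x y ≤ α * e x y := by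
  rw [Subtype.dist_eq, ← inv_mul_le_iff₀ hα]
  exact (he.2.2 x y).1

theorem MemD.le_mul_dist (he : MemD α Ω e) (x y : Ω) : e x y ≤ α * dist x y := by
  rw [Subtype.dist_eq]
  exact (he.2.2 x y).2

theorem MemD.continuous (he : MemD α Ω e) (hα : 0 ≤ α) : Continuous fun p : Ω × Ω => e p.1 p.2 :=
  LipschitzWith.continuous (K := (2 * α).toNNReal) <| .of_dist_le_mul fun p q => by
    calc dist (e p.1 p.2) (e q.1 q.2) ≤ e q.1 p.1 + e q.2 p.2 := he.1.abs_sub_le _ _ _ _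
      _ ≤ α * dist q.1 p.1 + α * dist q.2 p.2 :=
          add_le_add (he.le_mul_dist _ _) (he.le_mul_dist _ _)
      _ ≤ α * dist p q + α * dist p q := by
          rw [dist_comm q.1, dist_comm q.2, Prod.dist_eq]
          gcongr
          exacts [le_max_left _ _, le_max_right _ _]
      _ = (2 * α).toNNReal * dist p q := by rw [Real.coe_toNNReal _ (by positivity)]; ring

end DistancesOnOmega

theorem exists_tendsto_zero_eventually {P : ℝ → ℕ → Prop} (h : ∀ ε > 0, ∀ᶠ n in atTop, P ε n) :
    ∃ ε : ℕ → ℝ, Tendsto ε atTop (𝓝 0) ∧ ∀ᶠ n in atTop, P (ε n) n := by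
  choose N hN using fun j : ℕ => eventually_atTop.1 (h (1 / (j + 1)) Nat.one_div_pos_of_nat)
  set J : ℕ → ℕ := fun n => Nat.findGreatest (fun j => j + N j ≤ n) n
  have hJ : ∀ j n, j + N j ≤ n → j ≤ J n := fun j n hjn => Nat.le_findGreatest (by omega) hjn
  refine ⟨fun n => 1 / ((J n : ℝ) + 1), tendsto_one_div_add_atTop_nhds_zero_nat.comp
    (tendsto_atTop_atTop.2 fun j => ⟨j + N j, hJ j⟩), eventually_atTop.2 ⟨N 0, fun n hn => ?_⟩⟩
  have hJn : J n + N (J n) ≤ n :=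
    Nat.findGreatest_spec (P := fun j => j + N j ≤ n) (Nat.zero_le n) (by simpa using hn)
  exact hN _ _ (by omega)

section Recovery

variable {X : Type*} [MetricSpace X] {Ω : Set X} {α : ℝ} {d : Ω → Ω → ℝ}

theorem exists_approx_curve {e : Ω → Ω → ℝ} (hα : 0 < α) (he : MemD α Ω e) {γ : ℝ → Ω}
    {K : ℝ≥0} (hγ : LipschitzOnWith K γ (Icc 0 1)) {m : ℕ} (hm : 0 < m) {δ : ℝ} (hδ : 0 < δ)
    (hclose : ∀ i < m,
      e (γ (i / m)) (γ ((i + 1 : ℕ) / m)) ≤ d (γ ((i + 1 : ℕ) / m)) (γ (i / m)) + δ) :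
    ∃ Γ : ℝ → Ω, LipCurve (fun x y : Ω => dist x y) Γ ∧
      (∀ t ∈ Icc (0 : ℝ) 1, dist (Γ t) (γ t) ≤ (α ^ 2 + 1) * K / m + α * δ) ∧
      pathLength e Γ ≤ pathLength d γ + ENNReal.ofReal (2 * m * δ) := by
  have hm' : (0 : ℝ) < m := by exact_mod_cast hm
  set x : ℕ → Ω := fun i => γ (i / m) with hx
  obtain ⟨Γ, hΓlip, hΓdist, hΓlen⟩ :=
    exists_polygonal_curve he.1 he.2.1 hα.le (he.dist_le_mul hα) x hm hδ
  refine ⟨Γ, hΓlip, fun t ht => ?_, ?_⟩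
  · obtain ⟨i, hi, hti⟩ := exists_mem_Icc_div hm ht
    have hstep : e (x i) (x (i + 1)) ≤ α * (K / m) :=
      (he.le_mul_dist _ _).trans <| mul_le_mul_of_nonneg_left
        (hγ.dist_le_div hi (by push_cast; exact ⟨by gcongr; linarith, le_rfl⟩)) hα.le
    calc dist (Γ t) (γ t) ≤ dist (Γ t) (x i) + dist (x i) (γ t) := dist_triangle _ _ _
      _ ≤ α * (α * (K / m) + δ) + K / m :=
          add_le_add ((hΓdist i hi t hti).trans (by gcongr)) (hγ.dist_le_div hi hti)
      _ = (α ^ 2 + 1) * K / m + α * δ := by ring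
  calc pathLength e Γ
      ≤ ∑ i ∈ Finset.range m, (ENNReal.ofReal (e (x i) (x (i + 1))) + ENNReal.ofReal δ) := hΓlen
    _ ≤ ∑ i ∈ Finset.range m, (ENNReal.ofReal (d (x (i + 1)) (x i)) + ENNReal.ofReal (2 * δ)) := by
        refine Finset.sum_le_sum fun i hi => ?_
        rw [two_mul, ENNReal.ofReal_add hδ.le hδ.le, ← add_assoc]
        gcongr
        exact (ENNReal.ofReal_le_ofReal (hclose i (Finset.mem_range.1 hi))).trans
          ENNReal.ofReal_add_le
    _ = ∑ i ∈ Finset.range m, ENNReal.ofReal (d (x (i + 1)) (x i)) +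
          m * ENNReal.ofReal (2 * δ) := by
        rw [Finset.sum_add_distrib, Finset.sum_const, Finset.card_range, nsmul_eq_mul]
    _ ≤ pathLength d γ + ENNReal.ofReal (2 * m * δ) := by
        rw [← ENNReal.ofReal_natCast, ← ENNReal.ofReal_mul hm'.le, ← mul_assoc, mul_comm (m : ℝ)]
        gcongr
        simpa [hx, pathLength, div_self hm'.ne'] using sum_le_pathLengthOn_of_monotone d γ
          (t := fun i : ℕ => (i : ℝ) / m) (fun i j hij => by dsimp only; gcongr) m

variable {dn : ℕ → Ω → Ω → ℝ}

theorem eventually_exists_approx_curve (hα : 0 < α) (hdn : ∀ n, MemD α Ω (dn n))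
    (hsymm : ∀ x y, d x y = d y x) (hconv : TendstoUnifCompactly dn d) {γ : ℝ → Ω} {K : ℝ≥0}
    (hγ : LipschitzOnWith K γ (Icc 0 1)) {ε : ℝ} (hε : 0 < ε) :
    ∀ᶠ n in atTop, ∃ Γ : ℝ → Ω, LipCurve (fun x y : Ω => dist x y) Γ ∧
      (∀ t ∈ Icc (0 : ℝ) 1, dist (Γ t) (γ t) ≤ ε) ∧
      pathLength (dn n) Γ ≤ pathLength d γ + ENNReal.ofReal ε := by
  obtain ⟨m, hm⟩ := exists_nat_gt (2 * (α ^ 2 + 1) * K / ε)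
  have hm' : (0 : ℝ) < m := (by positivity : (0 : ℝ) ≤ _).trans_lt hm
  have hm1 : (1 : ℝ) ≤ m := by exact_mod_cast (show 0 < m by exact_mod_cast hm')
  have hmK : (α ^ 2 + 1) * K / m ≤ ε / 2 := by
    rw [div_lt_iff₀ hε] at hm
    rw [div_le_iff₀ hm']
    linarith
  set δ := ε / (2 * (α + 1) * m) with hδdef
  have hδ : 0 < δ := by positivity
  have hδε : 2 * (α + 1) * m * δ = ε := by rw [hδdef]; field_simp
  have hC := isCompact_Icc.image_of_continuousOn hγ.continuousOn
  obtain ⟨N, hN⟩ := hconv _ (hC.prod hC) δ hδ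
  filter_upwards [eventually_ge_atTop N] with n hn
  have hclose : ∀ i < m, dn n (γ (i / m)) (γ ((i + 1 : ℕ) / m)) ≤
      d (γ ((i + 1 : ℕ) / m)) (γ (i / m)) + δ := fun i hi => by
    have h := hN n hn (γ (i / m), γ ((i + 1 : ℕ) / m))
      ⟨mem_image_of_mem γ (natCast_div_mem_Icc hi.le), mem_image_of_mem γ (natCast_div_mem_Icc hi)⟩
    rw [hsymm]
    linarith [(abs_lt.1 h).2]
  obtain ⟨Γ, hΓlip, hΓdist, hΓlen⟩ :=
    exists_approx_curve hα (hdn n) hγ (by exact_mod_cast hm') hδ hclose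
  refine ⟨Γ, hΓlip, fun t ht => (hΓdist t ht).trans ?_, hΓlen.trans ?_⟩
  · nlinarith
  · gcongr
    nlinarith

theorem exists_recovery_sequence_s13 (hα : 0 < α) (hdn : ∀ n, MemD α Ω (dn n))
    (hsymm : ∀ x y, d x y = d y x) (hconv : TendstoUnifCompactly dn d) {γ : ℝ → Ω}
    (hγ : LipCurve (fun x y : Ω => dist x y) γ) :
    ∃ γn : ℕ → ℝ → Ω, (∀ n, LipCurve (fun x y : Ω => dist x y) (γn n)) ∧
      UnifConvCurves γn γ ∧ limsup (fun n => pathLength (dn n) (γn n)) atTop ≤ pathLength d γ := by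
  obtain ⟨K, hK⟩ := hγ.exists_lipschitzOnWith_dist
  obtain ⟨ε, hε0, hε⟩ := exists_tendsto_zero_eventually fun ε hε =>
    eventually_exists_approx_curve hα hdn hsymm hconv hK hε
  obtain ⟨N, hN⟩ := eventually_atTop.1 hε
  have hex : ∀ n, ∃ Γ : ℝ → Ω, LipCurve (fun x y : Ω => dist x y) Γ ∧
      (N ≤ n → (∀ t ∈ Icc (0 : ℝ) 1, dist (Γ t) (γ t) ≤ ε n) ∧
        pathLength (dn n) Γ ≤ pathLength d γ + ENNReal.ofReal (ε n)) := fun n => by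
    by_cases hn : N ≤ n
    · obtain ⟨Γ, hΓ, hΓε⟩ := hN n hn
      exact ⟨Γ, hΓ, fun _ => hΓε⟩
    · exact ⟨γ, hγ, fun h => absurd h hn⟩
  choose γn hlip hγn using hex
  refine ⟨γn, hlip, fun δ hδ => ?_, ?_⟩
  · obtain ⟨N', hN'⟩ :=
      eventually_atTop.1 ((hε0.eventually (gt_mem_nhds hδ)).and (eventually_ge_atTop N))
    exact ⟨N', fun n hn t ht => ((hγn n (hN' n hn).2).1 t ht).trans_lt (hN' n hn).1⟩
  · have hlim : Tendsto (fun n => pathLength d γ + ENNReal.ofReal (ε n)) atTop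
        (𝓝 (pathLength d γ)) := by
      simpa using tendsto_const_nhds.add ((ENNReal.continuous_ofReal.tendsto 0).comp hε0)
    refine (limsup_le_limsup ?_).trans hlim.limsup_eq.le
    filter_upwards [eventually_ge_atTop N] with n hn using (hγn n hn).2

end Recovery

theorem stmt13_general {X : Type*} [MetricSpace X] [LocallyCompactSpace X]
    (Ω : Set X) (hΩ : IsOpen Ω) (α : ℝ) (hα : 1 < α)
    (dn : ℕ → Ω → Ω → ℝ) (hdn : ∀ n, MemD α Ω (dn n))
    (d : Ω → Ω → ℝ) (hd : MemD α Ω d)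
    (hconv : TendstoUnifCompactly dn d) :
    GammaConvLengths dn d := by
  have : LocallyCompactSpace Ω := hΩ.locallyCompactSpace
  have hα₀ : 0 < α := zero_lt_one.trans hα
  exact ⟨fun γn γ _ _ hγ => pathLength_le_liminf
      (tendstoLocallyUniformly_of_tendstoUnifCompactly hconv) (hd.continuous hα₀.le) hγ,
    fun γ hγ => exists_recovery_sequence_s13 hα₀ hdn hd.1.1 hconv hγ⟩

/-- uniform convergence of the distances on compact subsets of `Ω × Ω`
implies Γ-convergence of the length functionals `L_{dn}` to `L_d` on Lipschitz
curves `[0,1] → Ω` with the topology of uniform convergence. -/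
theorem stmt13 {X : Type*} [MetricSpace X] [LocallyCompactSpace X] [CompleteSpace X]
    (Ω : Set X) (hΩ : IsOpen Ω) (α : ℝ) (hα : 1 < α)
    (hne : ∃ d₀ : Ω → Ω → ℝ, MemD α Ω d₀)
    (dn : ℕ → Ω → Ω → ℝ) (hdn : ∀ n, MemD α Ω (dn n))
    (d : Ω → Ω → ℝ) (hd : MemD α Ω d)
    (hconv : TendstoUnifCompactly dn d) :
    GammaConvLengths dn d :=
  stmt13_general Ω hΩ α hα dn hdn d hd hconv
end
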